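/- arXiv:math/9605201 — 9 statements merged into one kernel-verified Lean document; each statement's English description precedes it below -/
import Mathlib

section
/- Let A be a group and let C be a normal subgroup of A. Then the double G of A along C embeds in the direct product D = (A/C * A/C) × A of A with the free product of two copies of the quotient A/C; that is, there exists an injective group homomorphism from G into D. -/
open Monoid Subgroup Function

/-- Let `A` be a group and `C` a normal subgroup of `A`. Then the double
`G = {A * Ā ; C = C̄}` of `A` along `C` (formalized as the amalgamated free product, i.e. the
pushout of two copies of the inclusion `C ↪ A`) embeds in the direct product
`D = (A/C * A/C) × A`. -/
theorem double_embeds_in_free_product_times_base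
    (A : Type*) [Group A] (C : Subgroup A) [C.Normal] :
    ∃ f : Monoid.PushoutI (fun _ : Bool => C.subtype) →*
        (Monoid.Coprod (A ⧸ C) (A ⧸ C)) × A,
      Function.Injective f := by
  classical
  set Q := A ⧸ C with hQ
  let mk : A →* Q := QuotientGroup.mk' C
  -- the homomorphism `f` into `Coprod Q Q × A`
  let comp : Bool → (A →* Coprod Q Q × A) := fun b =>
    ((bif b then Coprod.inr.comp mk else Coprod.inl.comp mk)).prod (MonoidHom.id A)
  let k : C →* Coprod Q Q × A := (1 : C →* Coprod Q Q).prod C.subtype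
  have hcomp : ∀ b : Bool, (comp b).comp C.subtype = k := by
    intro b
    apply MonoidHom.ext
    intro c
    have hc : mk (c : A) = 1 := (QuotientGroup.eq_one_iff _).2 c.2
    cases b <;>
      simp [comp, k, hc]
  let f : Monoid.PushoutI (fun _ : Bool => C.subtype) →* Coprod Q Q × A :=
    Monoid.PushoutI.lift comp k hcomp
  -- the auxiliary homomorphism `F` into `CoprodI (fun _ : Bool => Q) × A`
  let comp' : Bool → (A →* CoprodI (fun _ : Bool => Q) × A) := fun b =>
    ((CoprodI.of (M := fun _ : Bool => Q) (i := b)).comp mk).prod (MonoidHom.id A)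
  let k' : C →* CoprodI (fun _ : Bool => Q) × A :=
    (1 : C →* CoprodI (fun _ : Bool => Q)).prod C.subtype
  have hcomp' : ∀ b : Bool, (comp' b).comp C.subtype = k' := by
    intro b
    apply MonoidHom.ext
    intro c
    have hc : mk (c : A) = 1 := (QuotientGroup.eq_one_iff _).2 c.2
    simp [comp', k', hc]
  let F : Monoid.PushoutI (fun _ : Bool => C.subtype) →* CoprodI (fun _ : Bool => Q) × A :=
    Monoid.PushoutI.lift comp' k' hcomp'
  -- `F` factors through `f`
  let χ : Coprod Q Q →* CoprodI (fun _ : Bool => Q) :=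
    Coprod.lift (CoprodI.of (M := fun _ : Bool => Q) (i := false))
      (CoprodI.of (M := fun _ : Bool => Q) (i := true))
  have hFf : (χ.prodMap (MonoidHom.id A)).comp f = F := by
    apply Monoid.PushoutI.hom_ext
    · intro b
      apply MonoidHom.ext
      intro a
      cases b <;>
        simp [f, F, comp, comp', χ]
    · apply MonoidHom.ext
      intro c
      simp [f, F, k, k']
  -- the two projections out of the coproduct over `Bool` copies of `A`
  let π : CoprodI (fun _ : Bool => A) →* CoprodI (fun _ : Bool => Q) :=
    CoprodI.lift (fun b => (CoprodI.of (M := fun _ : Bool => Q) (i := b)).comp mk)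
  let σ : CoprodI (fun _ : Bool => A) →* A := CoprodI.lift (fun _ => MonoidHom.id A)
  have hFcop : F.comp Monoid.PushoutI.ofCoprodI = π.prod σ := by
    apply CoprodI.ext_hom
    intro b
    apply MonoidHom.ext
    intro a
    simp [F, comp', π, σ]
  -- `F` is injective
  have hFinj : ∀ g, F g = 1 → g = 1 := by
    intro g hg
    obtain ⟨d⟩ := Monoid.PushoutI.NormalWord.transversal_nonempty (fun _ : Bool => C.subtype)
      (fun _ => C.subtype_injective)
    set w := Monoid.PushoutI.NormalWord.equiv (d := d) g with hw
    have hgw : g = w.prod := (Monoid.PushoutI.NormalWord.equiv.symm_apply_apply g).symm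
    have hprod : w.prod = Monoid.PushoutI.base _ w.head
        * Monoid.PushoutI.ofCoprodI w.toWord.prod := rfl
    -- evaluate `F g`
    have hFg : F g = (π w.toWord.prod, (w.head : A) * σ w.toWord.prod) := by
      rw [hgw, hprod, map_mul]
      have h1 : F (Monoid.PushoutI.base _ w.head) = (1, (w.head : A)) := by
        simp [F, k']
      have h2 : F (Monoid.PushoutI.ofCoprodI w.toWord.prod)
          = (π w.toWord.prod, σ w.toWord.prod) := by
        have := congrArg (fun h => h w.toWord.prod) hFcop
        simpa using this
      rw [h1, h2, Prod.mk_mul_mk, one_mul]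
    rw [hg] at hFg
    have hπ : π w.toWord.prod = 1 := congrArg Prod.fst hFg.symm
    have hσ : (w.head : A) * σ w.toWord.prod = 1 := congrArg Prod.snd hFg.symm
    -- build the image word in `CoprodI (fun _ : Bool => Q)`
    have hW : w.toList = [] := by
      by_contra hne
      let W : CoprodI.Word (fun _ : Bool => Q) :=
        { toList := w.toList.map fun l => ⟨l.1, mk l.2⟩
          ne_one := by
            rintro l hl
            obtain ⟨⟨i, a⟩, hmem, rfl⟩ := List.mem_map.1 hl
            intro h1
            have haC : a ∈ C := (QuotientGroup.eq_one_iff _).1 h1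
            have haR : a ∈ ((C.subtype.range : Subgroup A) : Set A) := by
              rw [Subgroup.range_subtype]; exact haC
            have haset : a ∈ d.set i := w.normalized i a hmem
            have hane : a ≠ 1 := w.ne_one _ hmem
            have := (d.compl i).1
              (a₁ := (⟨⟨a, haR⟩, ⟨1, d.one_mem i⟩⟩ : _ × _))
              (a₂ := (⟨⟨1, one_mem _⟩, ⟨a, haset⟩⟩ : _ × _))
              (by simp)
            exact hane (by simpa using (congrArg (fun p => (p.2 : A)) this).symm)
          chain_ne := by
            rw [List.isChain_map]
            exact w.chain_ne }
      have hWprod : W.prod = π w.toWord.prod := by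
        show (List.map (fun l => CoprodI.of (M := fun _ : Bool => Q) l.snd) W.toList).prod
          = π (List.map (fun l => CoprodI.of (M := fun _ : Bool => A) l.snd) w.toList).prod
        rw [map_list_prod]
        simp only [List.map_map, W]
        refine congrArg List.prod (List.map_congr_left fun l _ => ?_)
        simp only [Function.comp_apply, π, CoprodI.lift_of, MonoidHom.comp_apply]
      have hW1 : W.prod = 1 := by rw [hWprod, hπ]
      have hWempty : W = CoprodI.Word.empty := by
        apply (CoprodI.Word.equiv (M := fun _ : Bool => Q)).symm.injective
        show W.prod = CoprodI.Word.empty.prod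
        rw [hW1, CoprodI.Word.prod_empty]
      have : w.toList.map (fun l => (⟨l.1, mk l.2⟩ : Σ _ : Bool, Q)) = [] :=
        congrArg CoprodI.Word.toList hWempty
      exact hne (List.map_eq_nil_iff.1 this)
    have hword : w.toWord = CoprodI.Word.empty := CoprodI.Word.ext hW
    have hhead : (w.head : A) = 1 := by
      rw [hword] at hσ
      simpa using hσ
    rw [hgw, hprod, hword]
    simp only [CoprodI.Word.prod_empty, map_one, mul_one]
    have : w.head = 1 := Subtype.ext hhead
    rw [this, map_one]
  -- conclude injectivity of `f`
  refine ⟨f, ?_⟩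
  rw [injective_iff_map_eq_one]
  intro g hg
  apply hFinj
  rw [← hFf, MonoidHom.comp_apply, hg, map_one]
end

section
/- Let A be a group with subgroups N ≤ C where N is normal in A. Let G be the double of A along C. Then G embeds in the direct product D = {A/N * Ā/N̄ ; C/N = C̄/N̄} × A of A with the double of A/N along the image C/N of C in A/N; that is, there exists an injective group homomorphism from G into D. -/
open Monoid Monoid.PushoutI Subgroup Function

/-- Theorem 5: Let `A` be a group with subgroups `N ≤ C` where `N` is normal in
`A`. Then the double of `A` along `C` embeds in the direct product of `A` with the double of
`A/N` along the image `C/N` of `C` in `A/N`. Doubles are formalized as amalgamated free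
products (pushouts of two copies of the subgroup inclusion). -/
theorem double_embeds_in_double_of_quotient_times_base
    (A : Type*) [Group A] (N C : Subgroup A) [N.Normal] (hNC : N ≤ C) :
    ∃ f : Monoid.PushoutI (fun _ : Bool => C.subtype) →*
        (Monoid.PushoutI (fun _ : Bool => (C.map (QuotientGroup.mk' N)).subtype)) × A,
      Function.Injective f := by
  classical
  set q : A →* A ⧸ N := QuotientGroup.mk' N with hq
  set C' : Subgroup (A ⧸ N) := C.map q with hC'
  set φ : ∀ _ : Bool, (↥C) →* A := fun _ => C.subtype with hφdef
  set φ' : ∀ _ : Bool, (↥C') →* (A ⧸ N) := fun _ => C'.subtype with hφ'def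
  have hφinj : ∀ i, Injective (φ i) := fun _ => Subtype.coe_injective
  have hφ'inj : ∀ i, Injective (φ' i) := fun _ => Subtype.coe_injective
  -- the map `C → C'`
  let qC : (↥C) →* (↥C') := MonoidHom.codRestrict (q.comp C.subtype) C'
    (fun c => ⟨c.1, c.2, rfl⟩)
  -- first component: induced map between the pushouts
  let f₁ : PushoutI φ →* PushoutI φ' :=
    PushoutI.lift (fun i => (PushoutI.of (φ := φ') i).comp q)
      ((PushoutI.base φ').comp qC)
      (by
        intro i
        ext c
        simp only [MonoidHom.comp_apply]
        exact of_apply_eq_base φ' i (qC c))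
  -- second component: fold map to `A`
  let f₂ : PushoutI φ →* A :=
    PushoutI.lift (fun _ => MonoidHom.id A) C.subtype (fun i => rfl)
  refine ⟨f₁.prod f₂, ?_⟩
  rw [injective_iff_map_eq_one]
  intro x hx
  have hx1 : f₁ x = 1 := congrArg Prod.fst hx
  have hx2 : f₂ x = 1 := congrArg Prod.snd hx
  obtain ⟨d⟩ := NormalWord.transversal_nonempty φ hφinj
  set w : NormalWord d := NormalWord.equiv x with hw
  have hxw : x = w.prod := by
    rw [hw]; exact (NormalWord.equiv.left_inv x).symm
  -- the underlying word of `w` is reduced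
  have hred : Reduced φ w.toWord := by
    intro l hl hlr
    have hset : l.2 ∈ d.set l.1 := w.normalized _ _ (by exact hl)
    have h1 : l.2 ≠ 1 := w.toWord.ne_one l hl
    have hs1 : (((d.compl l.1).equiv l.2).2 : A) = (1 : A) :=
      congrArg Subtype.val
        ((d.compl l.1).equiv_snd_eq_one_of_mem_of_one_mem (d.one_mem l.1) hlr)
    have hs2 : (((d.compl l.1).equiv l.2).2 : A) = l.2 :=
      ((d.compl l.1).equiv_snd_eq_self_iff_mem (one_mem _)).2 hset
    exact h1 (hs2.symm.trans hs1)
  -- the image word in the quotient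
  have hmemC : ∀ l ∈ w.toWord.toList, (Sigma.snd l) ∉ C := by
    intro l hl hlC
    exact hred l hl (by simpa [hφdef, Subgroup.range_subtype] using hlC)
  let w' : Monoid.CoprodI.Word (fun _ : Bool => A ⧸ N) :=
    { toList := w.toWord.toList.map (fun l => ⟨l.1, q l.2⟩)
      ne_one := by
        intro l' hl'
        simp only [List.mem_map] at hl'
        obtain ⟨l, hl, rfl⟩ := hl'
        intro h1
        have : l.2 ∈ N := (QuotientGroup.eq_one_iff _).1 h1
        exact hmemC l hl (hNC this)
      chain_ne := by
        rw [List.isChain_map]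
        exact w.toWord.chain_ne }
  have hred' : Reduced φ' w' := by
    intro l' hl'
    simp only [w', List.mem_map] at hl'
    obtain ⟨l, hl, rfl⟩ := hl'
    intro hr
    have hmem : q l.2 ∈ C' := by simpa [hφ'def, Subgroup.range_subtype] using hr
    obtain ⟨c, hc, hcq⟩ := hmem
    have : c⁻¹ * l.2 ∈ N := QuotientGroup.eq.1 hcq
    have : l.2 ∈ C := by
      have := mul_mem hc (hNC this)
      simpa using this
    exact hmemC l hl this
  -- compute `f₁ x`
  have hf₁of : f₁ (ofCoprodI w.toWord.prod) = ofCoprodI w'.prod := by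
    show (f₁.comp ofCoprodI) w.toWord.prod = ofCoprodI w'.prod
    rw [Monoid.CoprodI.Word.prod, Monoid.CoprodI.Word.prod, MonoidHom.map_list_prod,
      MonoidHom.map_list_prod, List.map_map, List.map_map]
    have hlist : w'.toList = w.toWord.toList.map (fun l => ⟨l.1, q l.2⟩) := rfl
    rw [hlist, List.map_map]
    congr 1
  have hf₁x : f₁ x = PushoutI.base φ' (qC w.head) * ofCoprodI w'.prod := by
    rw [hxw, NormalWord.prod, map_mul, hf₁of]
    simp only [f₁, lift_base]
    rfl
  -- the image word must be empty
  have hbase : ofCoprodI w'.prod ∈ (PushoutI.base φ').range := by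
    refine ⟨(qC w.head)⁻¹, ?_⟩
    rw [map_inv]
    rw [hf₁x] at hx1
    exact (inv_eq_iff_mul_eq_one.2 hx1).symm ▸ rfl
  have hempty : w' = Monoid.CoprodI.Word.empty := hred'.eq_empty_of_mem_range hφ'inj hbase
  have hnil : w.toWord.toList = [] := by
    have := congrArg Monoid.CoprodI.Word.toList hempty
    simpa [w', Monoid.CoprodI.Word.empty] using this
  -- hence `x` is in the base group
  have hxbase : x = PushoutI.base φ w.head := by
    rw [hxw, NormalWord.prod, Monoid.CoprodI.Word.prod, hnil]
    simp
  have : (w.head : A) = 1 := by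
    rw [hxbase] at hx2
    simpa [f₂] using hx2
  have : w.head = 1 := Subtype.coe_injective (by simpa using this)
  rw [hxbase, this, map_one]
end

section
/- Let A be a group with subgroups N ≤ C where N is normal in A. Then the HNN extension A*_C = ⟨A, s | s⁻¹cs = c for all c ∈ C⟩ embeds in the direct product D' = ((A/N)*_{C/N}) × A of A with the HNN extension of A/N in which a stable letter commutes with the image C/N of C; that is, there exists an injective group homomorphism from A*_C into D'. -/
/-!
Reduction mod `N`, fixing the stable letter, maps `A*_C` to `(A/N)*_{C/N}`. Since `N ≤ C`, an
element of `A` lies in `C` exactly when its image lies in `C/N`, so reduced words map to reduced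
words, and Britton's lemma shows that every element killed by this map lies in `A`. On `A` the
retraction `A*_C → A` that kills the stable letter is injective.
-/

open HNNExtension HNNExtension.NormalWord

namespace HNNExtension

variable {G H : Type*} [Group G] [Group H] {A B : Subgroup G} {A' B' : Subgroup H}
  {φ : A ≃* B} {φ' : A' ≃* B'}

theorem comap_toSubgroup_le {f : G →* H} (hA : A'.comap f ≤ A) (hB : B'.comap f ≤ B) (u : ℤˣ) :
    (toSubgroup A' B' u).comap f ≤ toSubgroup A B u := by
  rcases Int.units_eq_one_or u with rfl | rfl
  exacts [hA, hB]

def NormalWord.ReducedWord.map (f : G →* H) (hA : A'.comap f ≤ A) (hB : B'.comap f ≤ B)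
    (w : ReducedWord G A B) : ReducedWord H A' B' where
  head := f w.head
  toList := w.toList.map (Prod.map id f)
  chain := (List.isChain_map _).2 <| w.chain.imp fun _ _ h hm =>
    h (comap_toSubgroup_le hA hB _ hm)

theorem NormalWord.ReducedWord.prod_map {F : HNNExtension G A B φ →* HNNExtension H A' B' φ'}
    {f : G →* H} (hof : ∀ g, F (of g) = of (f g)) (ht : F t = t)
    (hA : A'.comap f ≤ A) (hB : B'.comap f ≤ B) (w : ReducedWord G A B) :
    F (w.prod φ) = (w.map f hA hB).prod φ' := by
  simp [ReducedWord.prod, ReducedWord.map, map_list_prod, hof, ht, Function.comp_def]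

/-- Britton's lemma transported along `F`. -/
theorem mem_range_of_map_mem_range {F : HNNExtension G A B φ →* HNNExtension H A' B' φ'}
    {f : G →* H} (hof : ∀ g, F (of g) = of (f g)) (ht : F t = t)
    (hA : A'.comap f ≤ A) (hB : B'.comap f ≤ B) {x : HNNExtension G A B φ}
    (hx : F x ∈ (of.range : Subgroup (HNNExtension H A' B' φ'))) :
    x ∈ (of.range : Subgroup (HNNExtension G A B φ)) := by
  obtain ⟨d⟩ := TransversalPair.nonempty G A B
  set w := (NormalWord.equiv φ d x).toReducedWord
  have hw : w.prod φ = x := (NormalWord.equiv φ d).symm_apply_apply x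
  rw [← hw, ReducedWord.prod_map hof ht hA hB] at hx
  have hnil : w.toList = [] :=
    List.map_eq_nil_iff.1 (ReducedWord.toList_eq_nil_of_mem_of_range _ _ hx)
  exact ⟨w.head, by simp [← hw, ReducedWord.prod, hnil]⟩

variable {C : Subgroup G} {D : Subgroup H}

def mapRefl (f : G →* H) (h : C.map f ≤ D) :
    HNNExtension G C C (MulEquiv.refl C) →* HNNExtension H D D (MulEquiv.refl D) :=
  lift (of.comp f) t fun c => t_mul_of (φ := MulEquiv.refl D) ⟨f c, h ⟨c, c.2, rfl⟩⟩

@[simp]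
theorem mapRefl_of (f : G →* H) (h : C.map f ≤ D) (g : G) : mapRefl f h (of g) = of (f g) :=
  lift_of _ _ _ g

@[simp]
theorem mapRefl_t (f : G →* H) (h : C.map f ≤ D) : mapRefl f h t = t :=
  lift_t _ _ _

variable (C) in
def retract : HNNExtension G C C (MulEquiv.refl C) →* G :=
  lift (MonoidHom.id G) 1 fun _ => by simp

@[simp]
theorem retract_of (g : G) : retract C (of g) = g :=
  lift_of _ _ _ g

end HNNExtension

/-- Theorem 6: Let `A` be a group with subgroups `N ≤ C` where `N` is normal in
`A`. Then the HNN extension `A*_C = ⟨A, s | s⁻¹cs = c, ∀ c ∈ C⟩` embeds in the direct product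
`D' = ((A/N)*_{C/N}) × A` of `A` with the analogous HNN extension of `A/N` along the image
`C/N` of `C` in `A/N`. -/
theorem hnn_embeds_in_hnn_of_quotient_times_base
    (A : Type*) [Group A] (N C : Subgroup A) [N.Normal] (hNC : N ≤ C) :
    ∃ f : HNNExtension A C C (MulEquiv.refl C) →*
        (HNNExtension (A ⧸ N) (C.map (QuotientGroup.mk' N)) (C.map (QuotientGroup.mk' N))
          (MulEquiv.refl (C.map (QuotientGroup.mk' N)))) × A,
      Function.Injective f := by
  have hC : (C.map (QuotientGroup.mk' N)).comap (QuotientGroup.mk' N) ≤ C :=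
    (Subgroup.comap_map_eq_self (by rwa [QuotientGroup.ker_mk'])).le
  refine ⟨(mapRefl (QuotientGroup.mk' N) le_rfl).prod (retract C), ?_⟩
  refine (injective_iff_map_eq_one _).2 fun x hx => ?_
  have hq : mapRefl (QuotientGroup.mk' N) le_rfl x = 1 := congrArg Prod.fst hx
  have hr : retract C x = 1 := congrArg Prod.snd hx
  obtain ⟨a, rfl⟩ := mem_range_of_map_mem_range (mapRefl_of _ le_rfl) (mapRefl_t _ le_rfl) hC hC
    (hq ▸ one_mem _)
  rw [retract_of] at hr
  rw [hr, map_one]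
end

section
/- Let A be a group with subgroup C, and let A*_C = ⟨A, s | s⁻¹cs = c for all c ∈ C⟩ be the corresponding HNN extension. Then the homomorphism from the double G = {A * Ā ; C = C̄} of A along C to A*_C, which sends each a in the first copy A to a ∈ A*_C and each ā in the second copy Ā to s⁻¹as ∈ A*_C, is injective. In particular, A*_C contains an isomorphic copy of the double of A along C, namely the subgroup generated by A and s⁻¹As. -/
/-!
Let `ℤ` act on the double `G = A *_C Ā` by powers of the involution swapping the two factors.
The swap fixes the amalgamated subgroup `C`, so `a ↦ a`, `s ↦ 1 ∈ ℤ` defines a homomorphism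
`A*_C → G ⋊ ℤ`. It sends `s⁻¹ a s` to the swap of `a`, which is `ā`; hence its composite with
`G → A*_C` is the inclusion of `G` into `G ⋊ ℤ`, and `G → A*_C` is injective.
-/

open Monoid HNNExtension SemidirectProduct

namespace Monoid.PushoutI

section Permute

variable {ι H G : Type*} [Monoid H] [Monoid G] (φ : H →* G)

def permuteFactorsHom (σ : Equiv.Perm ι) :
    PushoutI (fun _ : ι => φ) →* PushoutI (fun _ : ι => φ) :=
  lift (fun i => of (φ := fun _ : ι => φ) (σ i)) (base _) fun i => of_comp_eq_base (σ i)

@[simp]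
theorem permuteFactorsHom_of (σ : Equiv.Perm ι) (i : ι) (g : G) :
    permuteFactorsHom φ σ (of i g) = of (σ i) g :=
  lift_of _ _ _ _

@[simp]
theorem permuteFactorsHom_base (σ : Equiv.Perm ι) (h : H) :
    permuteFactorsHom φ σ (base _ h) = base _ h :=
  lift_base _ _ _ _

theorem permuteFactorsHom_comp_symm (σ : Equiv.Perm ι) :
    (permuteFactorsHom φ σ).comp (permuteFactorsHom φ σ.symm) = MonoidHom.id _ :=
  hom_ext (fun i => by ext; simp) (by ext; simp)

def permuteFactors (σ : Equiv.Perm ι) : MulAut (PushoutI (fun _ : ι => φ)) :=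
  MonoidHom.toMulEquiv (permuteFactorsHom φ σ) (permuteFactorsHom φ σ.symm)
    (by simpa using permuteFactorsHom_comp_symm φ σ.symm) (permuteFactorsHom_comp_symm φ σ)

@[simp]
theorem permuteFactors_of (σ : Equiv.Perm ι) (i : ι) (g : G) :
    permuteFactors φ σ (of i g) = of (σ i) g :=
  permuteFactorsHom_of φ σ i g

end Permute

theorem range_eq_closure_iUnion_range {ι H K : Type*} {G : ι → Type*} [Nonempty ι]
    [∀ i, Group (G i)] [Group H] [Group K] {φ : ∀ i, H →* G i} (f : PushoutI φ →* K) :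
    f.range = Subgroup.closure (⋃ i, Set.range fun g : G i => f (of i g)) := by
  refine le_antisymm ?_ (Subgroup.closure_le _ |>.mpr ?_)
  · rintro _ ⟨x, rfl⟩
    induction x using induction_on with
    | of i g => exact Subgroup.subset_closure (Set.mem_iUnion.mpr ⟨i, g, rfl⟩)
    | base h =>
      obtain ⟨i⟩ := ‹Nonempty ι›
      rw [← of_apply_eq_base φ i]
      exact Subgroup.subset_closure (Set.mem_iUnion.mpr ⟨i, _, rfl⟩)
    | mul x y hx hy => simpa only [map_mul] using mul_mem hx hy
  · rintro _ ⟨_, ⟨i, rfl⟩, g, rfl⟩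
    exact ⟨of i g, rfl⟩

end Monoid.PushoutI

section

variable {A : Type*} [Group A] (C : Subgroup A)

local notation "Double" => PushoutI (fun _ : Bool => C.subtype)

local notation "ofD" => PushoutI.of (φ := fun _ : Bool => C.subtype)

def swapAction : Multiplicative ℤ →* MulAut Double :=
  zpowersHom _ (PushoutI.permuteFactors C.subtype (Equiv.swap false true))

theorem swapAction_ofAdd_one_of (b : Bool) (x : A) :
    swapAction C (.ofAdd 1) (ofD b x) = PushoutI.of (!b) x := by
  cases b <;> simp [swapAction]

theorem swapAction_ofAdd_one_inv_of (b : Bool) (x : A) :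
    (swapAction C (.ofAdd 1))⁻¹ (ofD b x) = PushoutI.of (!b) x := by
  rw [MulAut.inv_def, MulEquiv.symm_apply_eq, swapAction_ofAdd_one_of, Bool.not_not]

theorem swapAction_ofAdd_one_of_mem {c : A} (hc : c ∈ C) :
    swapAction C (.ofAdd 1) (ofD false c) = PushoutI.of false c := by
  simp only [swapAction_ofAdd_one_of, Bool.not_false]
  exact (PushoutI.of_apply_eq_base _ true (⟨c, hc⟩ : C)).trans
    (PushoutI.of_apply_eq_base _ false (⟨c, hc⟩ : C)).symm

noncomputable def hnnToSwapSemidirect :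
    HNNExtension A C C (MulEquiv.refl C) →* Double ⋊[swapAction C] Multiplicative ℤ :=
  HNNExtension.lift (inl.comp (ofD false)) (inr (.ofAdd 1)) fun c => by
    simp only [MonoidHom.comp_apply, MulEquiv.refl_apply]
    conv_rhs => rw [← swapAction_ofAdd_one_of_mem C c.2, inl_aut, map_inv, inv_mul_cancel_right]

@[simp]
theorem hnnToSwapSemidirect_of (x : A) :
    hnnToSwapSemidirect C (HNNExtension.of x) = inl (ofD false x) :=
  HNNExtension.lift_of _ _ _ _

@[simp]
theorem hnnToSwapSemidirect_t : hnnToSwapSemidirect C t = inr (.ofAdd 1) :=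
  HNNExtension.lift_t _ _ _

theorem hnnToSwapSemidirect_comp_eq_inl
    (f : Double →* HNNExtension A C C (MulEquiv.refl C))
    (hf₁ : ∀ x : A, f (ofD false x) = HNNExtension.of x)
    (hf₂ : ∀ x : A, f (ofD true x) = t⁻¹ * HNNExtension.of x * t) :
    (hnnToSwapSemidirect C).comp f = inl := by
  refine PushoutI.hom_ext_nonempty fun b => MonoidHom.ext fun x => ?_
  cases b with
  | false => simp [hf₁]
  | true =>
    simp only [MonoidHom.comp_apply, hf₂, map_mul, map_inv, hnnToSwapSemidirect_of,
      hnnToSwapSemidirect_t]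
    rw [← map_inv inr, ← inl_aut_inv, swapAction_ofAdd_one_inv_of, Bool.not_false]

end

/-- Let `A` be a group with subgroup `C` and let `A*_C` be the HNN extension
`⟨A, s | s⁻¹cs = c, ∀ c ∈ C⟩`. The homomorphism from the double `G = {A * Ā ; C = C̄}`
(formalized as the pushout of two copies of `C ↪ A`) to `A*_C` sending each `a` in the first
copy of `A` to `a` and each `ā` in the second copy to `s⁻¹as` is injective; its image is the
subgroup generated by `A` and `s⁻¹As`. -/
theorem double_embeds_in_hnn
    (A : Type*) [Group A] (C : Subgroup A)
    (f : Monoid.PushoutI (fun _ : Bool => C.subtype) →* HNNExtension A C C (MulEquiv.refl C))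
    (hf₁ : ∀ x : A, f (Monoid.PushoutI.of (φ := fun _ : Bool => C.subtype) false x) =
      HNNExtension.of x)
    (hf₂ : ∀ x : A, f (Monoid.PushoutI.of (φ := fun _ : Bool => C.subtype) true x) =
      (HNNExtension.t : HNNExtension A C C (MulEquiv.refl C))⁻¹ * HNNExtension.of x *
        HNNExtension.t) :
    Function.Injective f ∧
    f.range = Subgroup.closure
      (Set.range (HNNExtension.of : A →* HNNExtension A C C (MulEquiv.refl C)) ∪
        Set.range (fun x : A =>
          (HNNExtension.t : HNNExtension A C C (MulEquiv.refl C))⁻¹ * HNNExtension.of x *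
            HNNExtension.t)) := by
  refine ⟨?_, ?_⟩
  · refine Function.Injective.of_comp (f := hnnToSwapSemidirect C) ?_
    rw [← MonoidHom.coe_comp, hnnToSwapSemidirect_comp_eq_inl C f hf₁ hf₂]
    exact inl_injective
  · rw [PushoutI.range_eq_closure_iUnion_range, Set.union_comm, Set.union_eq_iUnion]
    congr 1
    refine Set.iUnion_congr fun b => ?_
    cases b <;> simp only [hf₁, hf₂, cond_true, cond_false]
end

section
/- Stallings' group S, given by the presentation ⟨a, b, c, d, e | b⁻¹ab = c⁻¹ac, b⁻¹ab = d⁻¹ad, b⁻¹ab = e⁻¹ae, [c,d] = 1, [d,b] = 1, [e,c] = 1, [e,b] = 1⟩, embeds in the direct product F × (F × ℤ) × F, where F denotes a free group of rank two and ℤ an infinite cyclic group; that is, there exists an injective group homomorphism from S into F₂ × (F₂ × ℤ) × F₂. -/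
namespace Stallings

/-- The generators `a, b, c, d, e` of the free group of rank 5. -/
noncomputable def a : FreeGroup (Fin 5) := FreeGroup.of 0
noncomputable def b : FreeGroup (Fin 5) := FreeGroup.of 1
noncomputable def c : FreeGroup (Fin 5) := FreeGroup.of 2
noncomputable def d : FreeGroup (Fin 5) := FreeGroup.of 3
noncomputable def e : FreeGroup (Fin 5) := FreeGroup.of 4

/-- The seven relators of Stallings' group `S`:
`b⁻¹ab(c⁻¹ac)⁻¹, b⁻¹ab(d⁻¹ad)⁻¹, b⁻¹ab(e⁻¹ae)⁻¹, [c,d], [d,b], [e,c], [e,b]`,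
where `[x,y] = x⁻¹y⁻¹xy`. -/
noncomputable def stallingsRelators : Set (FreeGroup (Fin 5)) :=
  {b⁻¹ * a * b * (c⁻¹ * a * c)⁻¹, b⁻¹ * a * b * (d⁻¹ * a * d)⁻¹,
   b⁻¹ * a * b * (e⁻¹ * a * e)⁻¹,
   c⁻¹ * d⁻¹ * c * d, d⁻¹ * b⁻¹ * d * b, e⁻¹ * c⁻¹ * e * c, e⁻¹ * b⁻¹ * e * b}

/-- Stallings' group `S`, presented as
`⟨a, b, c, d, e | b⁻¹ab = c⁻¹ac = d⁻¹ad = e⁻¹ae, [c,d] = [d,b] = [e,c] = [e,b] = 1⟩`. -/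
noncomputable abbrev StallingsGroup : Type :=
  FreeGroup (Fin 5) ⧸ Subgroup.normalClosure stallingsRelators


end Stallings

/-!
Let `N` be the free group on symbols `aₙ` (`n ∈ ℤ`) and let `F₂ × F₂ = ⟨b, c⟩ × ⟨d, e⟩` act on `N`
by `aₙ ↦ aₙ₊ₖ`, where `k` is the total exponent sum. Sending `a ↦ a₀` and `b, c, d, e` to the free
generators of `F₂ × F₂` kills the relators of `S`, so it defines `S → N ⋊ (F₂ × F₂)`. Conversely,
the relations of `S` force each of `b, c, d, e` to conjugate `bⁿ a b⁻ⁿ` to `bⁿ⁺¹ a b⁻⁽ⁿ⁺¹⁾`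
(for `c`, rewrite `bⁿ a b⁻ⁿ` as `dⁿ a d⁻ⁿ` and use `[c, d] = 1`), which is exactly what makes
`aₙ ↦ bⁿ a b⁻ⁿ` extend to a homomorphism `N ⋊ (F₂ × F₂) → S`. It is a left inverse, so
`S → N ⋊ (F₂ × F₂)` is injective. Finally `N ⋊ ℤ ≅ F₂ = ⟨x, y⟩` via `aₙ ↦ xⁿ y x⁻ⁿ`, so
`N ⋊ (F₂ × F₂)` embeds in `F₂ × (F₂ × ℤ) × F₂`: keep the two factors of `F₂ × F₂`, and in the
middle put the image in `N ⋊ ℤ ≅ F₂` (collapsing `F₂ × F₂` to `ℤ` by the exponent sum) together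
with the exponent sum.
-/

section

variable {M : Type*} [Group M] {a x y : M}

theorem inv_mul_inv_mul_mul_eq_one_iff_commute : x⁻¹ * y⁻¹ * x * y = 1 ↔ Commute x y := by
  rw [mul_assoc, mul_assoc, inv_mul_eq_one, eq_inv_mul_iff_mul_eq, eq_comm, commute_iff_eq]

namespace Commute

theorem mul_conj_mul_inv_eq_of_inv_conj_eq (hxy : Commute x y) (h : x⁻¹ * a * x = y⁻¹ * a * y) :
    x * a * x⁻¹ = y * a * y⁻¹ :=
  calc x * a * x⁻¹ = x * y * (y⁻¹ * a * y) * (x * y)⁻¹ := by group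
    _ = y * x * (x⁻¹ * a * x) * (y * x)⁻¹ := by rw [← h, hxy.eq]
    _ = y * a * y⁻¹ := by group

theorem zpow_conj_eq_of_conj_eq (hxy : Commute x y) (h : x * a * x⁻¹ = y * a * y⁻¹) (n : ℤ) :
    x ^ n * a * x ^ (-n) = y ^ n * a * y ^ (-n) := by
  have hz : Commute a (y⁻¹ * x) :=
    calc a * (y⁻¹ * x) = y⁻¹ * (y * a * y⁻¹) * x := by group
      _ = y⁻¹ * (x * a * x⁻¹) * x := by rw [h]
      _ = y⁻¹ * x * a := by group
  have hx : x ^ n = y ^ n * (y⁻¹ * x) ^ n := by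
    rw [← ((Commute.refl y).inv_right.mul_right hxy.symm).mul_zpow, mul_inv_cancel_left]
  calc x ^ n * a * x ^ (-n) = y ^ n * (a * (y⁻¹ * x) ^ n) * ((y⁻¹ * x) ^ n)⁻¹ * y ^ (-n) := by
        rw [zpow_neg, hx, (hz.zpow_right n).eq]; group
    _ = y ^ n * a * y ^ (-n) := by group

theorem conj_zpow_conj_of_conj_eq (hxy : Commute x y) (h : x * a * x⁻¹ = y * a * y⁻¹) (n : ℤ) :
    x * (y ^ n * a * y ^ (-n)) * x⁻¹ = y ^ (n + 1) * a * y ^ (-(n + 1)) :=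
  calc x * (y ^ n * a * y ^ (-n)) * x⁻¹ = x * y ^ n * a * (y ^ (-n) * x⁻¹) := by group
    _ = y ^ n * x * a * (x⁻¹ * y ^ (-n)) := by
        rw [(hxy.zpow_right n).eq, ← (hxy.zpow_right (-n)).inv_left.eq]
    _ = y ^ n * (x * a * x⁻¹) * y ^ (-n) := by group
    _ = y ^ (n + 1) * a * y ^ (-(n + 1)) := by rw [h]; group

end Commute

end

namespace FreeGroup

variable {α M : Type*} [Group M]

theorem mem_of_forall_of_mem (f : FreeGroup α →* M) {K : Subgroup M} (h : ∀ i, f (of i) ∈ K)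
    (u : FreeGroup α) : f u ∈ K := by
  induction u using FreeGroup.induction_on with
  | C1 => simp
  | of i => exact h i
  | inv_of i hi => simpa using K.inv_mem hi
  | mul u v hu hv => simpa using K.mul_mem hu hv

theorem commute_of_forall_commute_of {β : Type*} (f : FreeGroup α →* M) (g : FreeGroup β →* M)
    (h : ∀ i j, Commute (f (of i)) (g (of j))) (u : FreeGroup α) (w : FreeGroup β) :
    Commute (f u) (g w) := by
  have hu (j : β) : Commute (f u) (g (of j)) :=
    Subgroup.mem_centralizer_singleton_iff.mp <|
      mem_of_forall_of_mem f (fun i => Subgroup.mem_centralizer_singleton_iff.mpr (h i j)) u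
  have hw : Commute (g w) (f u) :=
    Subgroup.mem_centralizer_singleton_iff.mp <|
      mem_of_forall_of_mem g (fun j => Subgroup.mem_centralizer_singleton_iff.mpr (hu j).symm) w
  exact hw.symm

def exponentSum : FreeGroup α →* Multiplicative ℤ := FreeGroup.lift fun _ => .ofAdd 1

@[simp] theorem exponentSum_of (i : α) : exponentSum (of i) = .ofAdd 1 := lift_apply_of

def shift : Multiplicative ℤ →* MulAut (FreeGroup ℤ) where
  toFun k := freeGroupCongr (Equiv.addRight k.toAdd)
  map_one' := by ext; simp
  map_mul' k l := MulEquiv.toMonoidHom_injective <| ext_hom _ _ fun n => by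
    simp [add_assoc, add_comm l.toAdd]

@[simp] theorem shift_of (k : Multiplicative ℤ) (n : ℤ) : shift k (of n) = of (n + k.toAdd) := by
  simp [shift]

@[simp] theorem shift_symm_of (k : Multiplicative ℤ) (n : ℤ) :
    (shift k).symm (of n) = of (n - k.toAdd) := by
  simp [MulEquiv.symm_apply_eq]

section ShiftLift

variable {H : Type*} [Group H]

def conjShifts (t : ℤ → M) : Subgroup (M × Multiplicative ℤ) where
  carrier := {p | ∀ n, p.1 * t n * p.1⁻¹ = t (n + p.2.toAdd)}
  one_mem' n := by simp
  mul_mem' {p q} hp hq n := by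
    calc (p * q).1 * t n * (p * q).1⁻¹ = p.1 * (q.1 * t n * q.1⁻¹) * p.1⁻¹ := by
          rw [Prod.fst_mul]; group
      _ = t (n + (p * q).2.toAdd) := by
          rw [hq, hp, Prod.snd_mul, toAdd_mul, add_assoc, add_comm q.2.toAdd]
  inv_mem' {p} hp n := by
    calc p⁻¹.1 * t n * p⁻¹.1⁻¹ = p.1⁻¹ * (p.1 * t (n - p.2.toAdd) * p.1⁻¹) * p.1 := by
          rw [hp, sub_add_cancel]; simp
      _ = t (n + p⁻¹.2.toAdd) := by simp [sub_eq_add_neg, mul_assoc]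

def liftShift (t : ℤ → M) (ψ : H →* M) (χ : H →* Multiplicative ℤ)
    (h : ∀ g, (ψ g, χ g) ∈ conjShifts t) : FreeGroup ℤ ⋊[shift.comp χ] H →* M :=
  SemidirectProduct.lift (FreeGroup.lift t) ψ fun g => ext_hom _ _ fun n => by
    simpa using (h g n).symm

variable {t : ℤ → M} {ψ : H →* M} {χ : H →* Multiplicative ℤ} {h : ∀ g, (ψ g, χ g) ∈ conjShifts t}

@[simp] theorem liftShift_inl (x : FreeGroup ℤ) :
    liftShift t ψ χ h (SemidirectProduct.inl x) = lift t x := by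
  simp [liftShift]

end ShiftLift

theorem lift_mem_conjShifts {f : α → M} {t : ℤ → M} (h : ∀ i, (f i, .ofAdd 1) ∈ conjShifts t)
    (u : FreeGroup α) : (lift f u, exponentSum u) ∈ conjShifts t :=
  mem_of_forall_of_mem ((lift f).prod exponentSum) (fun i => by simpa using h i) u

theorem zpow_mem_conjShifts (x y : M) (k : Multiplicative ℤ) :
    (zpowersHom M x k, k) ∈ conjShifts fun n => x ^ n * y * x ^ (-n) := fun n => by
  simp only [zpowersHom_apply]
  group

theorem injective_lift_zpow_mul_mul_zpow_neg :
    Function.Injective (lift fun n : ℤ => (of 0 : FreeGroup (Fin 2)) ^ n * of 1 * of 0 ^ (-n)) := by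
  let ρ : FreeGroup (Fin 2) →* FreeGroup ℤ ⋊[shift] Multiplicative ℤ :=
    lift ![SemidirectProduct.inr (.ofAdd 1), SemidirectProduct.inl (of 0)]
  have hρ : ρ.comp (lift fun n : ℤ => (of 0 : FreeGroup (Fin 2)) ^ n * of 1 * of 0 ^ (-n)) =
      SemidirectProduct.inl := ext_hom _ _ fun n => by
    have hx : ρ (of 0) ^ n = SemidirectProduct.inr (.ofAdd n) := by
      rw [show ρ (of 0) = SemidirectProduct.inr (.ofAdd 1) from lift_apply_of, ← map_zpow,
        ← ofAdd_zsmul, zsmul_one, Int.cast_id]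
    simp only [MonoidHom.comp_apply, lift_apply_of, _root_.map_mul, _root_.map_zpow]
    rw [zpow_neg, hx, show ρ (of 1) = SemidirectProduct.inl (of 0) from lift_apply_of,
      ← _root_.map_inv, ← SemidirectProduct.inl_aut, shift_of, toAdd_ofAdd, zero_add]
  refine .of_comp (f := ρ) ?_
  rw [← MonoidHom.coe_comp, hρ]
  exact SemidirectProduct.inl_injective

end FreeGroup

namespace Stallings

noncomputable section

open FreeGroup (of exponentSum shift conjShifts liftShift lift_mem_conjShifts)
open SemidirectProduct (inl inr rightHom)

local notation "F₂" => FreeGroup (Fin 2)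

def totalExponent : F₂ × F₂ →* Multiplicative ℤ := exponentSum.coprod exponentSum

-- The group `N ⋊ (F₂ × F₂)` of the introduction, with `aₙ = of n`.
abbrev Model : Type := FreeGroup ℤ ⋊[shift.comp totalExponent] (F₂ × F₂)

def modelGen : Fin 5 → Model :=
  ![inl (of 0), inr (of 0, 1), inr (of 1, 1), inr (1, of 0), inr (1, of 1)]

theorem inr_inv_mul_inl_mul_inr {g : F₂ × F₂} (hg : totalExponent g = .ofAdd 1) :
    (inr g)⁻¹ * inl (of 0) * inr g = (inl (of (-1)) : Model) := by
  simpa [hg] using (SemidirectProduct.inl_aut (φ := shift.comp totalExponent) g⁻¹ (of 0)).symm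

theorem lift_modelGen_eq_one_of_mem_relators {r : FreeGroup (Fin 5)}
    (hr : r ∈ stallingsRelators) : FreeGroup.lift modelGen r = 1 := by
  have conj : ∀ i : Fin 4, (modelGen i.succ)⁻¹ * modelGen 0 * modelGen i.succ = inl (of (-1)) := by
    intro i
    fin_cases i <;> exact inr_inv_mul_inl_mul_inr (by simp [totalExponent])
  rcases hr with rfl | rfl | rfl | rfl | rfl | rfl | rfl <;>
    simp only [a, b, c, d, e, map_mul, map_inv, FreeGroup.lift_apply_of]
  · exact mul_inv_eq_one.mpr ((conj 0).trans (conj 1).symm)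
  · exact mul_inv_eq_one.mpr ((conj 0).trans (conj 2).symm)
  · exact mul_inv_eq_one.mpr ((conj 0).trans (conj 3).symm)
  all_goals refine inv_mul_inv_mul_mul_eq_one_iff_commute.mpr (Commute.map ?_ inr)
  exacts [MonoidHom.commute_inl_inr _ _, (MonoidHom.commute_inl_inr _ _).symm,
    (MonoidHom.commute_inl_inr _ _).symm, (MonoidHom.commute_inl_inr _ _).symm]

def toModel : StallingsGroup →* Model :=
  QuotientGroup.lift _ (FreeGroup.lift modelGen)
    (Subgroup.normalClosure_le_normal fun _ ↦ lift_modelGen_eq_one_of_mem_relators)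

def A : StallingsGroup := a
def B : StallingsGroup := b
def C : StallingsGroup := c
def D : StallingsGroup := d
def E : StallingsGroup := e

theorem mk_eq_one_of_mem_relators {r : FreeGroup (Fin 5)} (hr : r ∈ stallingsRelators) :
    (r : StallingsGroup) = 1 :=
  (QuotientGroup.eq_one_iff r).2 (Subgroup.subset_normalClosure hr)

theorem conj_eq_conj_of_mem_relators {x y z : FreeGroup (Fin 5)}
    (h : x⁻¹ * z * x * (y⁻¹ * z * y)⁻¹ ∈ stallingsRelators) :
    (x : StallingsGroup)⁻¹ * z * x = (y : StallingsGroup)⁻¹ * z * y :=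
  mul_inv_eq_one.mp (mk_eq_one_of_mem_relators h)

theorem commute_of_mem_relators {x y : FreeGroup (Fin 5)}
    (h : x⁻¹ * y⁻¹ * x * y ∈ stallingsRelators) : Commute (x : StallingsGroup) y :=
  inv_mul_inv_mul_mul_eq_one_iff_commute.mp (mk_eq_one_of_mem_relators h)

theorem conj_B_eq_conj_C : B⁻¹ * A * B = C⁻¹ * A * C :=
  conj_eq_conj_of_mem_relators (by simp [stallingsRelators])

theorem conj_B_eq_conj_D : B⁻¹ * A * B = D⁻¹ * A * D :=
  conj_eq_conj_of_mem_relators (by simp [stallingsRelators])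

theorem conj_B_eq_conj_E : B⁻¹ * A * B = E⁻¹ * A * E :=
  conj_eq_conj_of_mem_relators (by simp [stallingsRelators])

theorem commute_C_D : Commute C D := commute_of_mem_relators (by simp [stallingsRelators])

theorem commute_D_B : Commute D B := commute_of_mem_relators (by simp [stallingsRelators])

theorem commute_E_C : Commute E C := commute_of_mem_relators (by simp [stallingsRelators])

theorem commute_E_B : Commute E B := commute_of_mem_relators (by simp [stallingsRelators])

theorem conj_D_eq_conj_B : D * A * D⁻¹ = B * A * B⁻¹ :=
  commute_D_B.mul_conj_mul_inv_eq_of_inv_conj_eq conj_B_eq_conj_D.symm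

theorem conj_E_eq_conj_B : E * A * E⁻¹ = B * A * B⁻¹ :=
  commute_E_B.mul_conj_mul_inv_eq_of_inv_conj_eq conj_B_eq_conj_E.symm

theorem conj_C_eq_conj_D : C * A * C⁻¹ = D * A * D⁻¹ :=
  commute_C_D.mul_conj_mul_inv_eq_of_inv_conj_eq (conj_B_eq_conj_C.symm.trans conj_B_eq_conj_D)

def conjA (n : ℤ) : StallingsGroup := B ^ n * A * B ^ (-n)

theorem conjA_eq_zpow_D_conj (n : ℤ) : conjA n = D ^ n * A * D ^ (-n) :=
  (commute_D_B.zpow_conj_eq_of_conj_eq conj_D_eq_conj_B n).symm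

theorem B_mem_conjShifts : (B, .ofAdd 1) ∈ conjShifts conjA :=
  (Commute.refl B).conj_zpow_conj_of_conj_eq rfl

theorem C_mem_conjShifts : (C, .ofAdd 1) ∈ conjShifts conjA := fun n => by
  rw [conjA_eq_zpow_D_conj, conjA_eq_zpow_D_conj]
  exact commute_C_D.conj_zpow_conj_of_conj_eq conj_C_eq_conj_D n

theorem D_mem_conjShifts : (D, .ofAdd 1) ∈ conjShifts conjA :=
  commute_D_B.conj_zpow_conj_of_conj_eq conj_D_eq_conj_B

theorem E_mem_conjShifts : (E, .ofAdd 1) ∈ conjShifts conjA :=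
  commute_E_B.conj_zpow_conj_of_conj_eq conj_E_eq_conj_B

def liftBC : F₂ →* StallingsGroup := FreeGroup.lift ![B, C]

def liftDE : F₂ →* StallingsGroup := FreeGroup.lift ![D, E]

theorem commute_liftBC_liftDE (u w : F₂) : Commute (liftBC u) (liftDE w) :=
  FreeGroup.commute_of_forall_commute_of _ _ (Fin.forall_fin_two.mpr
    ⟨Fin.forall_fin_two.mpr ⟨commute_D_B.symm, commute_E_B.symm⟩,
      Fin.forall_fin_two.mpr ⟨commute_C_D, commute_E_C.symm⟩⟩) u w

def ofModel : Model →* StallingsGroup :=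
  liftShift conjA (liftBC.noncommCoprod liftDE commute_liftBC_liftDE) totalExponent fun g =>
    mul_mem
      (lift_mem_conjShifts (Fin.forall_fin_two.mpr ⟨B_mem_conjShifts, C_mem_conjShifts⟩) g.1)
      (lift_mem_conjShifts (Fin.forall_fin_two.mpr ⟨D_mem_conjShifts, E_mem_conjShifts⟩) g.2)

theorem ofModel_comp_toModel : ofModel.comp toModel = .id _ := by
  refine QuotientGroup.monoidHom_ext _ (FreeGroup.ext_hom _ _ fun i => ?_)
  fin_cases i <;> simp [toModel, modelGen, ofModel, liftBC, liftDE, conjA] <;> rfl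

theorem toModel_injective : Function.Injective toModel :=
  Function.LeftInverse.injective (g := ofModel) (DFunLike.congr_fun ofModel_comp_toModel)

def toFreeGroup : Model →* F₂ :=
  liftShift (fun n => of 0 ^ n * of 1 * of 0 ^ (-n)) ((zpowersHom F₂ (of 0)).comp totalExponent)
    totalExponent fun g => FreeGroup.zpow_mem_conjShifts _ _ (totalExponent g)

def modelEmbedding : Model →* F₂ × (F₂ × Multiplicative ℤ) × F₂ :=
  ((MonoidHom.fst _ _).comp rightHom).prod
    ((toFreeGroup.prod (totalExponent.comp rightHom)).prod
      ((MonoidHom.snd _ _).comp rightHom))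

theorem modelEmbedding_injective : Function.Injective modelEmbedding := by
  refine (injective_iff_map_eq_one _).mpr fun g hg => ?_
  have hright : g.right = 1 := Prod.ext (congrArg (·.1) hg :) (congrArg (·.2.2) hg :)
  have hleft : toFreeGroup (inl g.left) = 1 := by
    rw [← mul_one (inl g.left), ← map_one inr, ← hright, SemidirectProduct.inl_left_mul_inr_right]
    exact (congrArg (·.2.1.1) hg :)
  rw [toFreeGroup, FreeGroup.liftShift_inl] at hleft
  exact SemidirectProduct.ext
    (FreeGroup.injective_lift_zpow_mul_mul_zpow_neg (by simpa using hleft)) hright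

end

/-- Stallings' group `S` embeds in the direct product `F × (F × ℤ) × F`, where
`F` is a free group of rank two and `ℤ` is infinite cyclic. -/
theorem stallingsGroup_embeds :
    ∃ f : StallingsGroup →*
        FreeGroup (Fin 2) × (FreeGroup (Fin 2) × Multiplicative ℤ) × FreeGroup (Fin 2),
      Function.Injective f :=
  ⟨modelEmbedding.comp toModel, modelEmbedding_injective.comp toModel_injective⟩

end Stallings
end

section
/- Let C be a group and φ an automorphism of C, and let A = C ⋊_φ ℤ be the semidirect product in which the generator 1 ∈ ℤ acts on C by φ. Then the double of A along (the canonical copy of) C is isomorphic to the semidirect product C ⋊ F, where F is the free group of rank two with basis s, s̄ and both s and s̄ act on C by the automorphism φ. -/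
/-!
The pushout of the groups `C ⋊[φᵢ] ℤ` along their common copy of `C` is generated by `C` and
the stable letters `tᵢ = 1 ∈ ℤ` of the factors, subject only to `tᵢ c tᵢ⁻¹ = φᵢ c`: the
letters generate a free group acting on `C` through the `φᵢ`, which is exactly the presentation
of `C ⋊ F(ι)`. Both comparison maps come from universal properties (of the pushout, and of the
semidirect product), and they are mutually inverse on generators.
-/

open Monoid SemidirectProduct

theorem FreeGroup.map_mulAut_apply_of_forall_of {ι M N : Type*} [Group M] [Group N]
    (f : M →* N) (ρ : FreeGroup ι →* MulAut M) (σ : FreeGroup ι →* MulAut N)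
    (h : ∀ i m, f (ρ (of i) m) = σ (of i) (f m)) (g : FreeGroup ι) (m : M) :
    f (ρ g m) = σ g (f m) := by
  induction g using FreeGroup.induction_on generalizing m with
  | C1 => simp
  | of i => exact h i m
  | inv_of i ih =>
    rw [_root_.map_inv, _root_.map_inv, MulAut.inv_apply, MulAut.inv_apply,
      MulEquiv.eq_symm_apply, ← h, MulEquiv.apply_symm_apply]
  | mul x y ihx ihy => simp only [_root_.map_mul, MulAut.mul_apply, ihx, ihy]

section

variable {ι C : Type*} [Group C]

theorem inl_apply_eq_conj (ψ : MulAut C) (c : C) :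
    (inl (ψ c) : C ⋊[zpowersHom _ ψ] Multiplicative ℤ) =
      inr (.ofAdd 1) * inl c * (inr (.ofAdd 1))⁻¹ := by
  simpa using inl_aut (φ := zpowersHom _ ψ) (.ofAdd 1) c

variable (φ : ι → MulAut C)

local notation "MappingTorus" i => C ⋊[zpowersHom (MulAut C) (φ i)] Multiplicative ℤ
local notation "Pushout" => PushoutI (fun i => (inl : C →* MappingTorus i))
local notation "Semidirect" => C ⋊[FreeGroup.lift φ] FreeGroup ι

theorem zpowersHom_eq_lift_comp_zpowersHom (i : ι) :
    zpowersHom (MulAut C) (φ i) = (FreeGroup.lift φ).comp (zpowersHom _ (.of i)) :=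
  MonoidHom.ext_mint (by simp)

def mappingTorusToSemidirect (i : ι) : (MappingTorus i) →* Semidirect :=
  map (.id C) (zpowersHom _ (.of i)) fun n => by
    rw [zpowersHom_eq_lift_comp_zpowersHom]
    rfl

def pushoutToSemidirect : Pushout →* Semidirect :=
  PushoutI.lift (mappingTorusToSemidirect φ) inl fun i => by simp [mappingTorusToSemidirect]

def stableLetter (i : ι) : Pushout := PushoutI.of i (inr (.ofAdd 1))

def semidirectToPushout : Semidirect →* Pushout :=
  lift (PushoutI.base _) (FreeGroup.lift (stableLetter φ)) fun g => MonoidHom.ext <|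
    FreeGroup.map_mulAut_apply_of_forall_of (PushoutI.base _) (FreeGroup.lift φ)
      (MulAut.conj.comp (FreeGroup.lift (stableLetter φ))) (fun i c => by
        simp [stableLetter, ← PushoutI.of_apply_eq_base _ i, inl_apply_eq_conj]) g

theorem semidirectToPushout_comp_pushoutToSemidirect :
    (semidirectToPushout φ).comp (pushoutToSemidirect φ) = .id _ := by
  refine PushoutI.hom_ext (fun i => SemidirectProduct.hom_ext ?_ ?_) ?_
  · ext c
    simp [semidirectToPushout, pushoutToSemidirect, PushoutI.of_apply_eq_base]
  · refine MonoidHom.ext_mint ?_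
    simp [semidirectToPushout, pushoutToSemidirect, mappingTorusToSemidirect, stableLetter]
  · ext c
    simp [semidirectToPushout, pushoutToSemidirect]

theorem pushoutToSemidirect_comp_semidirectToPushout :
    (pushoutToSemidirect φ).comp (semidirectToPushout φ) = .id _ := by
  refine SemidirectProduct.hom_ext (MonoidHom.ext fun c => ?_) (FreeGroup.ext_hom _ _ fun i => ?_)
  · simp [semidirectToPushout, pushoutToSemidirect]
  · simp [semidirectToPushout, pushoutToSemidirect, mappingTorusToSemidirect, stableLetter]

def pushoutMulEquivSemidirect : Pushout ≃* Semidirect :=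
  MonoidHom.toMulEquiv (pushoutToSemidirect φ) (semidirectToPushout φ)
    (semidirectToPushout_comp_pushoutToSemidirect φ)
    (pushoutToSemidirect_comp_semidirectToPushout φ)

end

/-- Let `C` be a group, `φ` an automorphism of `C`, and `A = C ⋊_φ ℤ` the
semidirect product in which `1 ∈ ℤ` acts by `φ`. Then the double of `A` along the canonical
copy of `C` (formalized as the pushout of two copies of the canonical embedding `C →* A`) is
isomorphic to `C ⋊ F`, where `F` is the free group of rank two on `s, s̄` and both `s` and
`s̄` act on `C` by `φ`. -/
theorem double_of_mapping_torus_iso_semidirect_free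
    (C : Type*) [Group C] (φ : MulAut C) :
    Nonempty
      ((Monoid.PushoutI (fun _ : Bool =>
          (SemidirectProduct.inl : C →* C ⋊[zpowersHom (MulAut C) φ] Multiplicative ℤ))) ≃*
        (C ⋊[FreeGroup.lift (fun _ : Bool => φ)] FreeGroup Bool)) :=
  ⟨pushoutMulEquivSemidirect fun _ => φ⟩
end

section
/- Let C be a free group of finite rank and φ an automorphism of C, and let A = C ⋊_φ ℤ be the semidirect product in which the generator 1 ∈ ℤ acts on C by φ. Then A contains a free abelian subgroup of rank two (i.e., there is an injective homomorphism ℤ × ℤ → A) if and only if φ has a periodic conjugacy class, that is, if and only if there exist a non-zero integer m and elements v, w ∈ C with w ≠ 1 such that φᵐ(w) = v⁻¹wv. -/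
open SemidirectProduct Multiplicative


lemma freeGroup_of_not_commute {α : Type*} {x y : α} (h : x ≠ y) :
    FreeGroup.of x * FreeGroup.of y ≠ FreeGroup.of y * FreeGroup.of x := by
  classical
  intro hc
  have h2 := congrArg
    (FreeGroup.lift (fun z => if z = x then Equiv.swap (0 : Fin 3) 1
      else if z = y then Equiv.swap (1 : Fin 3) 2 else 1)) hc
  simp only [map_mul, FreeGroup.lift_apply_of, if_pos rfl, if_neg h, if_neg h.symm] at h2
  exact absurd h2 (by decide)

lemma freeGroup_unit_zpow_eq_one {k : ℤ} (h : FreeGroup.of () ^ k = (1 : FreeGroup Unit)) :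
    k = 0 := by
  have h0 : (1 : FreeGroup Unit) = FreeGroup.freeGroupUnitEquivInt.symm 0 := by
    show (1 : FreeGroup Unit) = FreeGroup.of () ^ (0 : ℤ)
    rw [zpow_zero]
  have := congrArg FreeGroup.freeGroupUnitEquivInt h
  rwa [show FreeGroup.of () ^ k = FreeGroup.freeGroupUnitEquivInt.symm k from rfl,
    Equiv.apply_symm_apply, h0, Equiv.apply_symm_apply] at this

lemma freeGroup_common_root {α : Type u_1} {a b : FreeGroup α} (hab : a * b = b * a) :
    ∃ (c : FreeGroup α) (p q : ℤ), a = c ^ p ∧ b = c ^ q ∧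
      (c = 1 ∨ ∀ k : ℤ, c ^ k = 1 → k = 0) := by
  classical
  set H : Subgroup (FreeGroup α) := Subgroup.closure {a, b} with hH
  have ha : a ∈ H := Subgroup.subset_closure (by simp)
  have hb : b ∈ H := Subgroup.subset_closure (by simp)
  have hcomm : ∀ u v : H, u * v = v * u := by
    letI : CommGroup H := Subgroup.closureCommGroupOfComm (k := {a, b}) (by
      simp only [Set.mem_insert_iff, Set.mem_singleton_iff]
      rintro u (rfl | rfl) v (rfl | rfl) <;> simp [hab])
    exact fun u v => mul_comm u v
  set X := IsFreeGroup.Generators H with hX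
  set e : H ≃* FreeGroup X := IsFreeGroup.toFreeGroup H with he
  have hsub : ∀ x y : X, x = y := by
    intro x y
    by_contra hxy
    apply freeGroup_of_not_commute hxy
    have h1 := hcomm (e.symm (FreeGroup.of x)) (e.symm (FreeGroup.of y))
    have h2 := congrArg e h1
    simpa using h2
  by_cases hne : Nonempty X
  · obtain ⟨x₀⟩ := hne
    let E : FreeGroup X ≃* FreeGroup Unit :=
      FreeGroup.freeGroupCongr ⟨fun _ => (), fun _ => x₀, fun z => (hsub _ _), fun u => rfl⟩
    set c : H := e.symm (E.symm (FreeGroup.of ())) with hc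
    have hEec : E (e c) = FreeGroup.of () := by simp [hc]
    have key : ∀ (u : FreeGroup α), u ∈ H → ∃ p : ℤ, u = (c : FreeGroup α) ^ p := by
      intro u hu
      refine ⟨FreeGroup.freeGroupUnitEquivInt (E (e ⟨u, hu⟩)), ?_⟩
      have h1 : E (e (⟨u, hu⟩ : H)) =
          FreeGroup.of () ^ (FreeGroup.freeGroupUnitEquivInt (E (e ⟨u, hu⟩)) : ℤ) :=
        (FreeGroup.freeGroupUnitEquivInt.symm_apply_apply _).symm
      have h2 : (⟨u, hu⟩ : H) = c ^ (FreeGroup.freeGroupUnitEquivInt (E (e ⟨u, hu⟩)) : ℤ) := by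
        apply e.injective
        apply E.injective
        rw [map_zpow, map_zpow, hEec]; exact h1
      have := congrArg (Subtype.val) h2
      simpa using this
    obtain ⟨p, hp⟩ := key a ha
    obtain ⟨q, hq⟩ := key b hb
    refine ⟨c, p, q, hp, hq, Or.inr ?_⟩
    intro k hk
    have hck : (c : FreeGroup α) ^ k = ((c ^ k : H) : FreeGroup α) := by simp
    rw [hck] at hk
    have hck1 : (c ^ k : H) = 1 := Subtype.ext hk
    have := congrArg (fun z => E (e z)) hck1
    simp only [map_zpow, hEec, map_one] at this
    exact freeGroup_unit_zpow_eq_one this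
  · have : IsEmpty X := not_nonempty_iff.mp hne
    have hsH : Subsingleton H := (Equiv.subsingleton e.toEquiv)
    have ha1 : a = 1 := by
      have : (⟨a, ha⟩ : H) = 1 := Subsingleton.elim _ _
      simpa using congrArg Subtype.val this
    have hb1 : b = 1 := by
      have : (⟨b, hb⟩ : H) = 1 := Subsingleton.elim _ _
      simpa using congrArg Subtype.val this
    exact ⟨1, 0, 0, by simp [ha1], by simp [hb1], Or.inl rfl⟩

lemma freeGroup_zpow_eq_one {α : Type u_1} {w : FreeGroup α} {p : ℤ} (hw : w ^ p = 1)
    (hp : p ≠ 0) : w = 1 := by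
  obtain ⟨c, n, m, hwn, -, hc⟩ := freeGroup_common_root (rfl : w * w = w * w)
  rcases hc with rfl | hc
  · simpa using hwn
  · rw [hwn, ← zpow_mul] at hw
    rcases mul_eq_zero.mp (hc _ hw) with rfl | rfl
    · simpa using hwn
    · exact absurd rfl hp

lemma no_Z2_in_freeGroup {α : Type u_1} {a b : FreeGroup α} (hab : a * b = b * a)
    (h : ∀ p q : ℤ, a ^ p * b ^ q = 1 → p = 0 ∧ q = 0) : False := by
  obtain ⟨c, p, q, hap, hbq, -⟩ := freeGroup_common_root hab
  have h1 : a ^ q * b ^ (-p) = 1 := by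
    rw [hap, hbq, ← zpow_mul, ← zpow_mul, ← zpow_add]
    rw [show p * q + q * -p = 0 by ring, zpow_zero]
  obtain ⟨hq, hp⟩ := h q (-p) h1
  have ha1 : a = 1 := by rw [hap, neg_eq_zero.mp hp, zpow_zero]
  obtain ⟨h10, -⟩ := h 1 0 (by simp [ha1])
  exact one_ne_zero h10

/-- Let `C` be a free group of finite rank, `φ` an automorphism of `C`, and
`A = C ⋊_φ ℤ` the semidirect product in which `1 ∈ ℤ` acts by `φ`. Then `A` contains a free
abelian subgroup of rank two (i.e. there is an injective homomorphism `ℤ × ℤ → A`) if and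
only if `φ` has a periodic conjugacy class, i.e. there exist a non-zero integer `m` and
elements `v, w ∈ C` with `w ≠ 1` such that `φᵐ(w) = v⁻¹wv`. -/
theorem mapping_torus_contains_Z2_iff_periodic_conjugacy_class
    (r : ℕ) (φ : MulAut (FreeGroup (Fin r))) :
    (∃ f : Multiplicative (ℤ × ℤ) →*
        (FreeGroup (Fin r) ⋊[zpowersHom (MulAut (FreeGroup (Fin r))) φ] Multiplicative ℤ),
      Function.Injective f) ↔
    (∃ (m : ℤ) (v w : FreeGroup (Fin r)),
      m ≠ 0 ∧ w ≠ 1 ∧ (φ ^ m) w = v⁻¹ * w * v) := by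
  constructor
  · rintro ⟨f, hf⟩
    set a := f (ofAdd (1, 0)) with haa
    set b := f (ofAdd (0, 1)) with hbb
    have hf_eval : ∀ p q : ℤ, f (ofAdd (p, q)) = a ^ p * b ^ q := by
      intro p q
      have h1 : (ofAdd ((p, q) : ℤ × ℤ)) =
          (ofAdd ((1, 0) : ℤ × ℤ)) ^ p * (ofAdd ((0, 1) : ℤ × ℤ)) ^ q := by
        rw [← ofAdd_zsmul, ← ofAdd_zsmul, ← ofAdd_add]
        congr 1
        simp [Prod.ext_iff]
      rw [h1, map_mul, map_zpow, map_zpow]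
    have hab : a * b = b * a := by
      rw [haa, hbb, ← map_mul f, ← map_mul f, mul_comm]
    have hright_zpow : ∀ (g : FreeGroup (Fin r) ⋊[zpowersHom (MulAut (FreeGroup (Fin r))) φ]
        Multiplicative ℤ) (n : ℤ), (g ^ n).right = g.right ^ n :=
      fun g n => map_zpow SemidirectProduct.rightHom g n
    set na : ℤ := toAdd a.right with hna
    set nb : ℤ := toAdd b.right with hnb
    set x := f (ofAdd (nb, -na)) with hx
    have hxr : x.right = 1 := by
      have h2 := congrArg SemidirectProduct.right (hf_eval nb (-na))
      rw [SemidirectProduct.mul_right, hright_zpow, hright_zpow] at h2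
      have h3 : toAdd ((a.right) ^ nb * (b.right) ^ (-na)) = 0 := by
        rw [toAdd_mul, toAdd_zpow, toAdd_zpow, ← hna, ← hnb]
        simp [smul_eq_mul]
        ring
      have h4 : (a.right) ^ nb * (b.right) ^ (-na) = 1 := by
        rw [← ofAdd_toAdd (a.right ^ nb * b.right ^ (-na)), h3, ofAdd_zero]
      rw [← h2] at h4
      exact h4
    by_cases hx1 : x = 1
    · have h0 : ofAdd ((nb, -na) : ℤ × ℤ) = (1 : Multiplicative (ℤ × ℤ)) := by
        apply hf
        rw [map_one]
        exact hx ▸ hx1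
      have hna0 : na = 0 ∧ nb = 0 := by
        have h8 := congrArg toAdd h0
        simp only [toAdd_ofAdd, toAdd_one, Prod.ext_iff, Prod.fst_zero, Prod.snd_zero,
          neg_eq_zero] at h8
        exact ⟨h8.2, h8.1⟩
      have har : a.right = 1 := by
        rw [← ofAdd_toAdd a.right, ← hna, hna0.1, ofAdd_zero]
      have hbr : b.right = 1 := by
        rw [← ofAdd_toAdd b.right, ← hnb, hna0.2, ofAdd_zero]
      have haL : a = SemidirectProduct.inl a.left := by
        have h9 := inl_left_mul_inr_right a
        rw [har] at h9
        simpa using h9.symm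
      have hbL : b = SemidirectProduct.inl b.left := by
        have h9 := inl_left_mul_inr_right b
        rw [hbr] at h9
        simpa using h9.symm
      have habL : a.left * b.left = b.left * a.left := by
        have h5 := congrArg SemidirectProduct.left hab
        simp only [SemidirectProduct.mul_left, har, hbr, map_one, MulAut.one_apply] at h5
        exact h5
      have hker : ∀ p q : ℤ, a.left ^ p * b.left ^ q = 1 → p = 0 ∧ q = 0 := by
        intro p q hpq
        have h6 : a ^ p * b ^ q = 1 := by
          calc a ^ p * b ^ q
              = SemidirectProduct.inl (a.left ^ p * b.left ^ q) := by
                rw [map_mul, map_zpow, map_zpow, ← haL, ← hbL]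
            _ = 1 := by rw [hpq, map_one]
        have h7 : ofAdd ((p, q) : ℤ × ℤ) = (1 : Multiplicative (ℤ × ℤ)) := by
          apply hf
          rw [map_one, hf_eval]
          exact h6
        have h8 := congrArg toAdd h7
        simpa [Prod.ext_iff] using h8
      exact (no_Z2_in_freeGroup habL hker).elim
    · have hwx : x.left ≠ 1 := by
        intro hL
        apply hx1
        have h9 := inl_left_mul_inr_right x
        rw [hL, hxr] at h9
        simpa using h9.symm
      have hkey : ∀ g : FreeGroup (Fin r) ⋊[zpowersHom (MulAut (FreeGroup (Fin r))) φ]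
          Multiplicative ℤ, g * x = x * g →
          (φ ^ (toAdd g.right)) x.left = g.left⁻¹ * (x.left * g.left) := by
        intro g hg
        have h1 := congrArg SemidirectProduct.left hg
        simp only [SemidirectProduct.mul_left, hxr, map_one, MulAut.one_apply] at h1
        rw [show (φ ^ (toAdd g.right)) x.left =
          (zpowersHom (MulAut (FreeGroup (Fin r))) φ) g.right x.left from rfl]
        exact eq_inv_mul_iff_mul_eq.mpr h1
      by_cases hna0 : na = 0
      · have hnb0 : nb ≠ 0 := by
          intro h
          apply hx1
          rw [hx, hna0, h]
          simp only [neg_zero]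
          rw [show (ofAdd ((0, 0) : ℤ × ℤ)) = (1 : Multiplicative (ℤ × ℤ)) from rfl, map_one]
        have hbx : b * x = x * b := by
          rw [hbb, hx, ← map_mul f, ← map_mul f, mul_comm]
        refine ⟨nb, b.left, x.left, hnb0, hwx, ?_⟩
        have h10 := hkey b hbx
        rw [← hnb] at h10
        exact h10.trans (mul_assoc _ _ _).symm
      · have hax : a * x = x * a := by
          rw [haa, hx, ← map_mul f, ← map_mul f, mul_comm]
        refine ⟨na, a.left, x.left, hna0, hwx, ?_⟩
        have h10 := hkey a hax
        rw [← hna] at h10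
        exact h10.trans (mul_assoc _ _ _).symm
  · rintro ⟨m, v, w, hm, hw, heq⟩
    set x : FreeGroup (Fin r) ⋊[zpowersHom (MulAut (FreeGroup (Fin r))) φ] Multiplicative ℤ :=
      inl w with hxd
    set y : FreeGroup (Fin r) ⋊[zpowersHom (MulAut (FreeGroup (Fin r))) φ] Multiplicative ℤ :=
      inl v * inr (ofAdd m) with hyd
    have hφm : (zpowersHom (MulAut (FreeGroup (Fin r))) φ) (ofAdd m) = φ ^ m := rfl
    have hc : x * y = y * x := by
      ext
      · simp [hxd, hyd, hφm, heq, mul_assoc]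
      · simp [hxd, hyd]
    refine ⟨{ toFun := fun z => x ^ (toAdd z).1 * y ^ (toAdd z).2,
              map_one' := by simp
              map_mul' := ?_ }, ?_⟩
    · intro z₁ z₂
      simp only [toAdd_mul, Prod.fst_add, Prod.snd_add]
      rw [zpow_add, zpow_add]
      have hcc : Commute (x ^ (toAdd z₂).1) (y ^ (toAdd z₁).2) :=
        (Commute.zpow_zpow (Commute.symm hc) _ _).symm
      rw [mul_assoc, ← mul_assoc (x ^ (toAdd z₂).1), hcc.eq]
      group
    · rw [injective_iff_map_eq_one]
      intro z hz
      simp only [MonoidHom.coe_mk, OneHom.coe_mk] at hz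
      set p := (toAdd z).1 with hp
      set q := (toAdd z).2 with hq
      have hyr : y.right = ofAdd m := by simp [hyd]
      have hxright : x.right = 1 := by simp [hxd]
      have hq0 : q = 0 := by
        have h1 := congrArg SemidirectProduct.right hz
        have h3 : (x ^ p).right = x.right ^ p := map_zpow SemidirectProduct.rightHom x p
        have h4 : (y ^ q).right = y.right ^ q := map_zpow SemidirectProduct.rightHom y q
        rw [SemidirectProduct.mul_right, h3, h4, hxright, hyr, one_zpow, one_mul] at h1
        have h5 : (ofAdd m) ^ q = (1 : Multiplicative ℤ) := h1
        have h6 := congrArg toAdd h5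
        rw [toAdd_zpow, toAdd_ofAdd, toAdd_one, smul_eq_mul] at h6
        rcases mul_eq_zero.mp h6 with h | h
        · exact h
        · exact absurd h hm
      have hp0 : p = 0 := by
        rw [hq0, zpow_zero, mul_one] at hz
        have h7 : (SemidirectProduct.inl (w ^ p) :
            FreeGroup (Fin r) ⋊[zpowersHom (MulAut (FreeGroup (Fin r))) φ] Multiplicative ℤ)
            = SemidirectProduct.inl 1 := by
          rw [map_zpow, map_one]
          exact hz
        have hwp : w ^ p = 1 := inl_injective h7
        by_contra hpne
        exact hw (freeGroup_zpow_eq_one hwp hpne)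
      have h8 : toAdd z = 0 := Prod.ext hp0 hq0
      have h9 := congrArg ofAdd h8
      simpa using h9
end

section
/- Let C be the free group of rank 3 with basis x₁, x₂, x₃ and let φ be the endomorphism of C determined by φ(x₁) = x₁, φ(x₂) = x₂x₁, φ(x₃) = x₃x₂. Then for every c ∈ C the function n ↦ |φⁿ(c)| is dominated by a quadratic function of n: there exists a constant K > 0 such that |φⁿ(c)| ≤ K(n² + 1) for all n ∈ ℕ, where |w| denotes the length of the reduced word representing w in the basis x₁, x₂, x₃. -/
/-!
`φ` is unipotent upper triangular on the generators: `φⁿ(x₁) = x₁`, `φⁿ(x₂) = x₂x₁ⁿ` has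
length `n + 1`, and `φⁿ⁺¹(x₃) = φⁿ(x₃)·φⁿ(x₂)`, so each step adds at most `n + 1` letters to
`φⁿ(x₃)`, whose length is therefore at most `n² + 1`. A homomorphism of free groups multiplies
word length by at most the largest length of an image of a generator, which gives
`|φⁿ(c)| ≤ |c|(n² + 1)`.
-/

/-- The endomorphism `φ` of the free group `C = F(x₁, x₂, x₃)` with `φ(x₁) = x₁`,
`φ(x₂) = x₂x₁`, `φ(x₃) = x₃x₂` (here `xᵢ = FreeGroup.of (i-1)`). -/
noncomputable def gerstenPhi : FreeGroup (Fin 3) →* FreeGroup (Fin 3) :=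
  FreeGroup.lift
    ![FreeGroup.of 0, FreeGroup.of 1 * FreeGroup.of 0, FreeGroup.of 2 * FreeGroup.of 1]

namespace FreeGroup

variable {α β : Type*} [DecidableEq β] (f : FreeGroup α →* FreeGroup β) {B : ℕ}

theorem norm_map_mk_le (hB : ∀ a, (f (of a)).norm ≤ B) (L : List (α × Bool)) :
    (f (mk L)).norm ≤ L.length * B := by
  induction L with
  | nil => simp [← one_eq_mk]
  | cons x L ih =>
    obtain ⟨a, b⟩ := x
    have hx : (f (mk [(a, b)])).norm ≤ B := by
      cases b
      · rw [show mk [(a, false)] = (of a)⁻¹ from rfl, _root_.map_inv, norm_inv_eq]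
        exact hB a
      · exact hB a
    rw [← show mk [(a, b)] * mk L = mk ((a, b) :: L) from mul_mk, _root_.map_mul]
    calc _ ≤ (f (mk [(a, b)])).norm + (f (mk L)).norm := norm_mul_le _ _
      _ ≤ B + L.length * B := Nat.add_le_add hx ih
      _ = (L.length + 1) * B := by ring

theorem norm_map_le [DecidableEq α] (hB : ∀ a, (f (of a)).norm ≤ B) (c : FreeGroup α) :
    (f c).norm ≤ c.norm * B := by
  have h := norm_map_mk_le f hB c.toWord
  rwa [mk_toWord] at h

end FreeGroup

open FreeGroup

theorem gerstenPhi_of_zero : gerstenPhi (of 0) = of 0 := by simp [gerstenPhi]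

theorem gerstenPhi_of_one : gerstenPhi (of 1) = of 1 * of 0 := by simp [gerstenPhi]

theorem gerstenPhi_of_two : gerstenPhi (of 2) = of 2 * of 1 := by simp [gerstenPhi]

theorem gerstenPhi_iterate_of_zero (n : ℕ) : (⇑gerstenPhi)^[n] (of 0) = of 0 :=
  Function.iterate_fixed gerstenPhi_of_zero n

theorem norm_gerstenPhi_iterate_of_one_le (n : ℕ) :
    ((⇑gerstenPhi)^[n] (of 1)).norm ≤ n + 1 := by
  induction n with
  | zero => simp [norm_of]
  | succ n ih =>
    rw [Function.iterate_succ_apply, gerstenPhi_of_one, iterate_map_mul, gerstenPhi_iterate_of_zero]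
    calc _ ≤ ((⇑gerstenPhi)^[n] (of 1)).norm + (of (0 : Fin 3)).norm := norm_mul_le _ _
      _ ≤ n + 1 + 1 := by rw [norm_of]; omega

theorem norm_gerstenPhi_iterate_of_two_le (n : ℕ) :
    ((⇑gerstenPhi)^[n] (of 2)).norm ≤ n ^ 2 + 1 := by
  induction n with
  | zero => simp [norm_of]
  | succ n ih =>
    rw [Function.iterate_succ_apply, gerstenPhi_of_two, iterate_map_mul]
    calc _ ≤ ((⇑gerstenPhi)^[n] (of 2)).norm + ((⇑gerstenPhi)^[n] (of 1)).norm :=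
          norm_mul_le _ _
      _ ≤ n ^ 2 + 1 + (n + 1) := Nat.add_le_add ih (norm_gerstenPhi_iterate_of_one_le n)
      _ ≤ (n + 1) ^ 2 + 1 := by nlinarith

theorem norm_gerstenPhi_iterate_of_le (n : ℕ) (i : Fin 3) :
    ((⇑gerstenPhi)^[n] (of i)).norm ≤ n ^ 2 + 1 := by
  fin_cases i
  · simp [gerstenPhi_iterate_of_zero]
  · have := norm_gerstenPhi_iterate_of_one_le n
    simp only [Fin.mk_one]
    nlinarith
  · exact norm_gerstenPhi_iterate_of_two_le n

/-- For every `c` in the free group `C = F(x₁, x₂, x₃)`, the reduced word length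
of `φⁿ(c)` is dominated by a quadratic function of `n`: there is a constant `K > 0` with
`|φⁿ(c)| ≤ K(n² + 1)` for all `n ∈ ℕ`. -/
theorem gerstenPhi_iterate_norm_quadratic_bound (c : FreeGroup (Fin 3)) :
    ∃ K : ℕ, 0 < K ∧ ∀ n : ℕ, ((⇑gerstenPhi)^[n] c).norm ≤ K * (n ^ 2 + 1) := by
  refine ⟨c.norm + 1, c.norm.succ_pos, fun n => ?_⟩
  -- `(⇑gerstenPhi)^[n]` is, by `rfl`, the coercion of the power `gerstenPhi ^ n` in `Monoid.End`.
  calc ((⇑gerstenPhi)^[n] c).norm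
      ≤ c.norm * (n ^ 2 + 1) :=
        norm_map_le ((show Monoid.End _ from gerstenPhi) ^ n) (norm_gerstenPhi_iterate_of_le n) c
    _ ≤ (c.norm + 1) * (n ^ 2 + 1) := by gcongr; omega
end

section
/- Let F be the free group of rank two with basis x, y. Then the commutator subgroup F′ of F is freely generated by the elements [x,y]^{xⁱyʲ} = (xⁱyʲ)⁻¹ (x⁻¹y⁻¹xy) (xⁱyʲ), where (i, j) ranges over ℤ × ℤ; that is, the homomorphism from the free group on the index set ℤ × ℤ to F sending the generator indexed by (i, j) to (xⁱyʲ)⁻¹[x,y](xⁱyʲ) is injective, and its image is exactly the commutator subgroup F′. -/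
/-!
Words in `x` and `y` are walks in the square grid `ℤ²`. Let `ℤ²` act on the free group `A` on
`ℤ²` by translation and map `F` to `A ⋊ ℤ²`, sending `x` and `y` to unit steps, where the step
along `y` also records the vertical edge it crosses. The conjugate of `[x,y]` indexed by `p` goes to
`A`, namely to the boundary of the square `p` conjugated by a word in the edges of column `0`.
Sending each vertical edge to the product of the squares between column `0` and that edge kills
column `0` and maps the boundary of square `p` to the generator `p`; this left inverse makes the
conjugates a free basis of their range. The range is normal, since conjugating a generator by
`x^{±1}` or `y^{±1}` gives a product of generators, and `x` and `y` commute modulo it, so it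
contains `F′`; it is contained in `F′` as each generator is a commutator.
-/

open SemidirectProduct
open scoped commutatorElement

namespace FreeGroup

variable {M : Type*} [AddGroup M]

def translate : Multiplicative M →* MulAut (FreeGroup M) where
  toFun z := freeGroupCongr (Equiv.addLeft z.toAdd)
  map_one' := by ext; simp [freeGroupCongr]
  map_mul' a b := by ext : 1; simp [freeGroupCongr, map.comp, Function.comp_def]

@[simp]
theorem translate_of (z : Multiplicative M) (q : M) : translate z (of q) = of (z.toAdd + q) := by
  simp [translate, freeGroupCongr]

@[simp]
theorem translate_symm_of (z : Multiplicative M) (q : M) :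
    (translate z).symm (of q) = of (-z.toAdd + q) := by
  rw [MulEquiv.symm_apply_eq, translate_of, add_neg_cancel_left]

@[simp]
theorem translate_zpow_of (z : Multiplicative M) (n : ℤ) (q : M) :
    (translate z ^ n) (of q) = of ((z ^ n).toAdd + q) := by
  rw [← map_zpow, translate_of]

theorem translate_translate (a b : Multiplicative M) (w : FreeGroup M) :
    translate a (translate b w) = translate (a * b) w := by
  rw [_root_.map_mul, MulAut.mul_apply]

end FreeGroup

namespace SemidirectProduct

variable {N H : Type*} [Group N] [Group H] {φ : H →* MulAut N}

theorem right_zpow (g : N ⋊[φ] H) (n : ℤ) : (g ^ n).right = g.right ^ n :=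
  map_zpow rightHom g n

theorem left_zpow_add_one (g : N ⋊[φ] H) (n : ℤ) :
    (g ^ (n + 1)).left = (g ^ n).left * φ (g.right ^ n) g.left := by
  rw [zpow_add_one, mul_left, right_zpow]

theorem left_zpow_mem {S : Subgroup N} {g : N ⋊[φ] H} (hg : ∀ k : ℤ, φ (g.right ^ k) g.left ∈ S)
    (n : ℤ) : (g ^ n).left ∈ S := by
  induction n using Int.induction_on with
  | zero => exact S.one_mem
  | succ n ih => rw [left_zpow_add_one]; exact S.mul_mem ih (hg n)
  | pred n ih =>
    have h := left_zpow_add_one g (-n - 1)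
    rw [sub_add_cancel] at h
    rw [eq_mul_inv_of_mul_eq h.symm]
    exact S.mul_mem ih (S.inv_mem (hg _))

theorem inv_mul_inl_mul (g : N ⋊[φ] H) (a : N) :
    g⁻¹ * inl a * g = inl (φ g.right⁻¹ (g.left⁻¹ * a * g.left)) := by
  ext <;> simp [mul_assoc]

end SemidirectProduct

namespace Subgroup

variable {G : Type*} [Group G]

theorem closure_normal_of_conj_mem {S T : Set G} (hT : closure T = ⊤)
    (hconj : ∀ t ∈ T, ∀ s ∈ S, t * s * t⁻¹ ∈ closure S ∧ t⁻¹ * s * t ∈ closure S) :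
    (closure S).Normal := by
  have conj_le (g : G) (hg : ∀ s ∈ S, g * s * g⁻¹ ∈ closure S) :
      closure S ≤ (closure S).comap (MulAut.conj g).toMonoidHom :=
    (closure_le _).2 hg
  rw [← normalizer_eq_top_iff, eq_top_iff, ← hT, closure_le]
  intro t ht
  rw [SetLike.mem_coe, mem_normalizer_iff]
  intro n
  refine ⟨fun hn => conj_le t (fun s hs => (hconj t ht s hs).1) hn, fun hn => ?_⟩
  have := conj_le t⁻¹ (fun s hs => by simpa using (hconj t ht s hs).2) hn
  simpa [mul_assoc] using this

theorem commutator_le_of_commutatorElement_mem {S : Set G} (hS : closure S = ⊤) {N : Subgroup G}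
    [N.Normal] (h : ∀ s ∈ S, ∀ t ∈ S, ⁅s, t⁆ ∈ N) : _root_.commutator G ≤ N := by
  rw [← Normal.quotient_commutative_iff_commutator_le]
  set S' : Set (G ⧸ N) := QuotientGroup.mk' N '' S
  have hS' : closure S' = ⊤ := by
    rw [← MonoidHom.map_closure (QuotientGroup.mk' N), hS, ← MonoidHom.range_eq_map,
      MonoidHom.range_eq_top]
    exact QuotientGroup.mk'_surjective N
  have : IsMulCommutative (closure S') := by
    refine isMulCommutative_closure ?_
    rintro - ⟨s, hs, rfl⟩ - ⟨t, ht, rfl⟩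
    rw [← commutatorElement_eq_one_iff_mul_comm, ← map_commutatorElement, QuotientGroup.mk'_apply,
      QuotientGroup.eq_one_iff]
    exact h s hs t ht
  exact ⟨⟨fun a b => setLike_mul_comm (s := closure S') (hS' ▸ mem_top a) (hS' ▸ mem_top b)⟩⟩

theorem mem_of_zero_mem_of_succ_mul_inv_mem {H : Subgroup G} {f : ℤ → G} (h0 : f 0 ∈ H)
    (hstep : ∀ j, f (j + 1) * (f j)⁻¹ ∈ H) (j : ℤ) : f j ∈ H := by
  induction j using Int.induction_on with
  | zero => exact h0
  | succ j ih => simpa using H.mul_mem (hstep j) ih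
  | pred j ih =>
    have h := H.mul_mem (H.inv_mem (hstep (-j - 1))) ih
    rwa [sub_add_cancel, mul_inv_rev, inv_inv, inv_mul_cancel_right] at h

end Subgroup

namespace FreeGroupRankTwo

open FreeGroup (of lift translate)
open Multiplicative

def x : FreeGroup (Fin 2) := of 0
def y : FreeGroup (Fin 2) := of 1

def commutatorConj (p : ℤ × ℤ) : FreeGroup (Fin 2) :=
  (x ^ p.1 * y ^ p.2)⁻¹ * (x⁻¹ * y⁻¹ * x * y) * (x ^ p.1 * y ^ p.2)

theorem commutatorConj_mem_commutator (p : ℤ × ℤ) :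
    commutatorConj p ∈ commutator (FreeGroup (Fin 2)) := by
  have h : commutatorConj p = ⁅(x ^ p.1 * y ^ p.2)⁻¹ * x⁻¹ * (x ^ p.1 * y ^ p.2),
      (x ^ p.1 * y ^ p.2)⁻¹ * y⁻¹ * (x ^ p.1 * y ^ p.2)⁆ := by
    simp only [commutatorConj, commutatorElement_def]; group
  rw [h, commutator_def]
  exact Subgroup.commutator_mem_commutator (Subgroup.mem_top _) (Subgroup.mem_top _)

abbrev Grid := FreeGroup (ℤ × ℤ) ⋊[translate] Multiplicative (ℤ × ℤ)

def toGrid : FreeGroup (Fin 2) →* Grid :=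
  lift ![inr (ofAdd (-1, 0)), inl (of (0, -1)) * inr (ofAdd (0, -1))]

/-- `(g ^ a).left = ∏_{0 ≤ k < a} (of (k, b))⁻¹` for `g = ⟨(of (0, b))⁻¹, ofAdd (1, 0)⟩`, read
as a cocycle for `a < 0`. -/
def rowWord (q : ℤ × ℤ) : FreeGroup (ℤ × ℤ) :=
  ((⟨(of (0, q.2))⁻¹, ofAdd (1, 0)⟩ : Grid) ^ q.1).left

theorem rowWord_zero (b : ℤ) : rowWord (0, b) = 1 := rfl

theorem rowWord_add_one (a b : ℤ) : rowWord (a + 1, b) = rowWord (a, b) * (of (a, b))⁻¹ := by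
  simp [rowWord, left_zpow_add_one]

def retraction : FreeGroup (ℤ × ℤ) →* FreeGroup (ℤ × ℤ) := lift rowWord

theorem toGrid_commutator :
    toGrid (x⁻¹ * y⁻¹ * x * y) = inl ((of (1, 0))⁻¹ * of (0, 0)) := by
  ext <;> simp [toGrid, x, y]

theorem retraction_translate_left_toGrid_y_zpow (j : ℤ) :
    retraction (translate (ofAdd (0, j)) (toGrid y ^ j).left) = 1 := by
  refine left_zpow_mem (S := (retraction.comp (translate (ofAdd (0, j))).toMonoidHom).ker) ?_ j
  intro k
  rw [MonoidHom.mem_ker]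
  simp [toGrid, y, retraction, rowWord_zero]

theorem retraction_left_toGrid_commutatorConj (p : ℤ × ℤ) :
    retraction (toGrid (commutatorConj p)).left = of p := by
  obtain ⟨i, j⟩ := p
  set v := (toGrid y ^ j).left
  have hpath : toGrid (x ^ i * y ^ j) = inr (ofAdd (-i, 0)) * toGrid y ^ j := by
    have hx : toGrid x = inr (ofAdd (-1, 0)) := by simp [toGrid, x]
    rw [map_mul, map_zpow, hx, ← map_zpow, ← ofAdd_zsmul]
    simp
  have hright : (toGrid (x ^ i * y ^ j)).right⁻¹ = ofAdd (i, j) := by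
    rw [hpath, mul_right, right_inr, right_zpow]
    simp [toGrid, y, ← ofAdd_zsmul, ← ofAdd_add, ← ofAdd_neg]
  have hleft : (toGrid (commutatorConj (i, j))).left =
      (translate (ofAdd (0, j)) v)⁻¹ * ((of (i + 1, j))⁻¹ * of (i, j)) *
        translate (ofAdd (0, j)) v := by
    rw [commutatorConj, map_mul, map_mul, map_inv, toGrid_commutator, inv_mul_inl_mul, left_inl,
      hright, hpath, mul_left, left_inr, right_inr, one_mul, map_mul, map_mul, map_inv,
      FreeGroup.translate_translate, ← ofAdd_add]
    simp [v]
  rw [hleft, map_mul, map_mul, map_inv, retraction_translate_left_toGrid_y_zpow]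
  simp [retraction, rowWord_add_one]

theorem toGrid_commutatorConj (p : ℤ × ℤ) :
    toGrid (commutatorConj p) = inl (toGrid (commutatorConj p)).left :=
  SemidirectProduct.ext rfl <|
    Abelianization.commutator_subset_ker (rightHom.comp toGrid) (commutatorConj_mem_commutator p)

theorem lift_commutatorConj_injective : Function.Injective (lift commutatorConj) := by
  set s := fun p => (toGrid (commutatorConj p)).left
  have hcomm : toGrid.comp (lift commutatorConj) = inl.comp (lift s) :=
    FreeGroup.ext_hom _ _ fun p => by simpa using toGrid_commutatorConj p
  have hretract : retraction.comp (lift s) = MonoidHom.id _ :=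
    FreeGroup.ext_hom _ _ fun p => by simpa using retraction_left_toGrid_commutatorConj p
  refine Function.Injective.of_comp (f := toGrid) ?_
  rw [← MonoidHom.coe_comp, hcomm, MonoidHom.coe_comp]
  exact inl_injective.comp (Function.LeftInverse.injective (DFunLike.congr_fun hretract))

theorem commutatorConj_mem_range (p : ℤ × ℤ) : commutatorConj p ∈ (lift commutatorConj).range :=
  ⟨of p, FreeGroup.lift_apply_of⟩

theorem y_mul_commutatorConj_mul_inv (p : ℤ × ℤ) :
    y * commutatorConj p * y⁻¹ = commutatorConj (p.1, p.2 - 1) := by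
  simp only [commutatorConj]; group

theorem inv_y_mul_commutatorConj_mul (p : ℤ × ℤ) :
    y⁻¹ * commutatorConj p * y = commutatorConj (p.1, p.2 + 1) := by
  simp only [commutatorConj]; group

theorem x_mul_commutatorConj_mul_inv (p : ℤ × ℤ) :
    x * commutatorConj p * x⁻¹ =
      ⁅y ^ (-p.2), x⁆⁻¹ * commutatorConj (p.1 - 1, p.2) * ⁅y ^ (-p.2), x⁆ := by
  simp only [commutatorConj, commutatorElement_def]; group

theorem inv_x_mul_commutatorConj_mul (p : ℤ × ℤ) :
    x⁻¹ * commutatorConj p * x =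
      ⁅y ^ (-p.2), x⁻¹⁆⁻¹ * commutatorConj (p.1 + 1, p.2) * ⁅y ^ (-p.2), x⁻¹⁆ := by
  simp only [commutatorConj, commutatorElement_def]; group

theorem commutatorElement_y_zpow_x_mem_range (j : ℤ) :
    ⁅y ^ j, x⁆ ∈ (lift commutatorConj).range := by
  refine Subgroup.mem_of_zero_mem_of_succ_mul_inv_mem (f := fun j => ⁅y ^ j, x⁆) (by simp)
    (fun j => ?_) j
  have h : ⁅y ^ (j + 1), x⁆ * ⁅y ^ j, x⁆⁻¹ = (commutatorConj (-1, -j - 1))⁻¹ := by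
    simp only [commutatorConj, commutatorElement_def]; group
  exact h ▸ inv_mem (commutatorConj_mem_range _)

theorem commutatorElement_y_zpow_inv_x_mem_range (j : ℤ) :
    ⁅y ^ j, x⁻¹⁆ ∈ (lift commutatorConj).range := by
  refine Subgroup.mem_of_zero_mem_of_succ_mul_inv_mem (f := fun j => ⁅y ^ j, x⁻¹⁆) (by simp)
    (fun j => ?_) j
  have h : ⁅y ^ (j + 1), x⁻¹⁆ * ⁅y ^ j, x⁻¹⁆⁻¹ = commutatorConj (0, -j - 1) := by
    simp only [commutatorConj, commutatorElement_def]; group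
  exact h ▸ commutatorConj_mem_range _

theorem range_lift_commutatorConj_normal : (lift commutatorConj).range.Normal := by
  rw [FreeGroup.range_lift_eq_closure]
  refine Subgroup.closure_normal_of_conj_mem (FreeGroup.closure_range_of _) ?_
  rintro - ⟨i, rfl⟩ - ⟨p, rfl⟩
  rw [← FreeGroup.range_lift_eq_closure]
  have hmem := commutatorConj_mem_range
  fin_cases i
  · change x * _ * x⁻¹ ∈ _ ∧ x⁻¹ * _ * x ∈ _
    rw [x_mul_commutatorConj_mul_inv, inv_x_mul_commutatorConj_mul]
    exact ⟨mul_mem (mul_mem (inv_mem (commutatorElement_y_zpow_x_mem_range _)) (hmem _))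
        (commutatorElement_y_zpow_x_mem_range _),
      mul_mem (mul_mem (inv_mem (commutatorElement_y_zpow_inv_x_mem_range _)) (hmem _))
        (commutatorElement_y_zpow_inv_x_mem_range _)⟩
  · change y * _ * y⁻¹ ∈ _ ∧ y⁻¹ * _ * y ∈ _
    rw [y_mul_commutatorConj_mul_inv, inv_y_mul_commutatorConj_mul]
    exact ⟨hmem _, hmem _⟩

theorem range_lift_commutatorConj :
    (lift commutatorConj).range = commutator (FreeGroup (Fin 2)) := by
  have := range_lift_commutatorConj_normal
  refine le_antisymm ?_ (Subgroup.commutator_le_of_commutatorElement_mem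
    (FreeGroup.closure_range_of _) ?_)
  · rw [FreeGroup.range_lift_eq_closure, Subgroup.closure_le]
    rintro - ⟨p, rfl⟩
    exact commutatorConj_mem_commutator p
  · have hxy : ⁅x, y⁆ = commutatorConj (-1, -1) := by
      simp only [commutatorConj, commutatorElement_def]; group
    rintro - ⟨i, rfl⟩ - ⟨j, rfl⟩
    fin_cases i <;> fin_cases j
    · simp
    · exact hxy ▸ commutatorConj_mem_range _
    · exact commutatorElement_inv x y ▸ hxy ▸ inv_mem (commutatorConj_mem_range _)
    · simp

end FreeGroupRankTwo

/-- Let `F` be the free group of rank two on `x, y` (here `x = FreeGroup.of 0`,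
`y = FreeGroup.of 1`). The commutator subgroup `F′` is freely generated by the elements
`[x,y]^{xⁱyʲ} = (xⁱyʲ)⁻¹(x⁻¹y⁻¹xy)(xⁱyʲ)` for `(i, j) ∈ ℤ × ℤ`: the homomorphism from the
free group on `ℤ × ℤ` to `F` sending the generator indexed by `(i, j)` to
`(xⁱyʲ)⁻¹[x,y](xⁱyʲ)` is injective and its range is exactly the commutator subgroup `F′`. -/
theorem commutator_subgroup_freely_generated_by_conjugates :
    Function.Injective
      (FreeGroup.lift (fun p : ℤ × ℤ =>
        ((FreeGroup.of 0 : FreeGroup (Fin 2)) ^ p.1 * FreeGroup.of 1 ^ p.2)⁻¹ *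
          ((FreeGroup.of 0)⁻¹ * (FreeGroup.of 1)⁻¹ * FreeGroup.of 0 * FreeGroup.of 1) *
          (FreeGroup.of 0 ^ p.1 * FreeGroup.of 1 ^ p.2))) ∧
    MonoidHom.range
      (FreeGroup.lift (fun p : ℤ × ℤ =>
        ((FreeGroup.of 0 : FreeGroup (Fin 2)) ^ p.1 * FreeGroup.of 1 ^ p.2)⁻¹ *
          ((FreeGroup.of 0)⁻¹ * (FreeGroup.of 1)⁻¹ * FreeGroup.of 0 * FreeGroup.of 1) *
          (FreeGroup.of 0 ^ p.1 * FreeGroup.of 1 ^ p.2))) =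
      commutator (FreeGroup (Fin 2)) :=
  ⟨FreeGroupRankTwo.lift_commutatorConj_injective, FreeGroupRankTwo.range_lift_commutatorConj⟩
end
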